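/- arXiv:1510.03695 — 10 statements merged into one kernel-verified Lean document; each statement's English description precedes it below -/
import Mathlib

section
/- Let p,q ∈ ℝⁿ₊ and r ∈ ℝᵐ₊ with |r| > 0. Then for all x ∈ ℝ: (i) β_x(p ⊕ 0_m, q ⊕ r) = β_x(p,q), where ⊕ denotes concatenation of vectors and 0_m is the zero vector of length m; (ii) β_{x·|r|}(p ⊗ r, q ⊗ r) = |r| · β_x(p,q), where ⊗ denotes the Kronecker (entrywise tensor) product of vectors. -/
open scoped BigOperators

/-- A test: a vector with entries in `[0,1]`. -/
def IsTest {ι : Type*} [Fintype ι] (t : ι → ℝ) : Prop := ∀ i, 0 ≤ t i ∧ t i ≤ 1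

/-- Dot product of two vectors. -/
def dot {ι : Type*} [Fintype ι] (t p : ι → ℝ) : ℝ := ∑ i, t i * p i

/-- `beta x p q` is the infimum of `t ⬝ q` over tests `t` with `t ⬝ p ≥ x`,
with value `⊤` (`+∞`) when no feasible test exists. -/
noncomputable def beta {ι : Type*} [Fintype ι] (x : ℝ) (p q : ι → ℝ) : EReal :=
  sInf {y : EReal | ∃ t : ι → ℝ, IsTest t ∧ x ≤ dot t p ∧ y = ((dot t q : ℝ) : EReal)}

/-- `alpha y p q` is the supremum of `t ⬝ p` over tests `t` with `t ⬝ q ≤ y`. -/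
noncomputable def alpha {ι : Type*} [Fintype ι] (y : ℝ) (p q : ι → ℝ) : ℝ :=
  sSup {x : ℝ | ∃ t : ι → ℝ, IsTest t ∧ dot t q ≤ y ∧ x = dot t p}

/-- A nonnegative matrix all of whose column sums are at most `1`. -/
def Substochastic {ι' ι : Type*} [Fintype ι'] [Fintype ι] (M : Matrix ι' ι ℝ) : Prop :=
  (∀ i j, 0 ≤ M i j) ∧ ∀ j, ∑ i, M i j ≤ 1

/-- A nonnegative matrix all of whose column sums equal `1`. -/
def Stochastic {ι' ι : Type*} [Fintype ι'] [Fintype ι] (M : Matrix ι' ι ℝ) : Prop :=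
  (∀ i j, 0 ≤ M i j) ∧ ∀ j, ∑ i, M i j = 1

/-- Relative submajorization: `(p,q) ≻ (p',q')`. -/
def SubMaj {ι ι' : Type*} [Fintype ι] [Fintype ι'] (p q : ι → ℝ) (p' q' : ι' → ℝ) : Prop :=
  ∃ M : Matrix ι' ι ℝ, Substochastic M ∧
    (∀ i, p' i ≤ M.mulVec p i) ∧ (∀ i, M.mulVec q i ≤ q' i)

/-- Relative majorization: `(p,q) ≽ (p',q')`. -/
def RelMaj {ι ι' : Type*} [Fintype ι] [Fintype ι'] (p q : ι → ℝ) (p' q' : ι' → ℝ) : Prop :=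
  ∃ M : Matrix ι' ι ℝ, Stochastic M ∧ M.mulVec p = p' ∧ M.mulVec q = q'

/-- Approximate relative submajorization: `(p,q) ≻_{ε,η} (p',q')`. -/
def ApproxSubMaj {ι ι' : Type*} [Fintype ι] [Fintype ι'] (ε η : ℝ)
    (p q : ι → ℝ) (p' q' : ι' → ℝ) : Prop :=
  ∃ (M : Matrix ι' ι ℝ) (a b : ι' → ℝ), Substochastic M ∧
    (∀ i, 0 ≤ a i) ∧ (∀ i, 0 ≤ b i) ∧ (∑ i, a i) ≤ ε ∧ (∑ i, b i) ≤ η ∧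
    (∀ i, p' i - a i ≤ M.mulVec p i) ∧ (∀ i, M.mulVec q i ≤ q' i + b i)

/-- Partial sum `∑_{j=1}^k v_{π(j)}` of the first `k` entries of `v` in the order given by `π`. -/
def psum {n : ℕ} (v : Fin n → ℝ) (π : Equiv.Perm (Fin n)) (k : ℕ) : ℝ :=
  ∑ j ∈ Finset.univ.filter (fun j : Fin n => (j : ℕ) < k), v (π j)

/-- `λ*_z(R→R')`: the largest `λ ∈ [0,1]` with `(p,q) ≻ (λ p', z q')`. -/
noncomputable def lambdaStar {ι ι' : Type*} [Fintype ι] [Fintype ι'] (z : ℝ)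
    (p q : ι → ℝ) (p' q' : ι' → ℝ) : ℝ :=
  sSup {lam : ℝ | 0 ≤ lam ∧ lam ≤ 1 ∧
    SubMaj p q (fun i => lam * p' i) (fun i => z * q' i)}

/-- `z*_λ(R→R')`: the smallest `z ≥ 0` with `(p,q) ≻ (λ p', z q')`. -/
noncomputable def zStar {ι ι' : Type*} [Fintype ι] [Fintype ι'] (lam : ℝ)
    (p q : ι → ℝ) (p' q' : ι' → ℝ) : ℝ :=
  sInf {z : ℝ | 0 ≤ z ∧ SubMaj p q (fun i => lam * p' i) (fun i => z * q' i)}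

/-- `ε*_z(R→R')`: the smallest error of the first kind. -/
noncomputable def epsStar {ι ι' : Type*} [Fintype ι] [Fintype ι'] (z : ℝ)
    (p q : ι → ℝ) (p' q' : ι' → ℝ) : ℝ :=
  sInf {ε : ℝ | 0 ≤ ε ∧ ApproxSubMaj ε 0 p q p' (fun i => z * q' i)}

/-- `η̂*_z(R→R')`: the smallest error of the second kind. -/
noncomputable def etaStar {ι ι' : Type*} [Fintype ι] [Fintype ι'] (z : ℝ)
    (p q : ι → ℝ) (p' q' : ι' → ℝ) : ℝ :=
  sInf {η : ℝ | 0 ≤ η ∧ ApproxSubMaj 0 η p q p' (fun i => z * q' i)}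

/-- Relative entropy `D(u,v) = Σ u_k ln(u_k/v_k)` (with `0 ln 0 = 0`). -/
noncomputable def relEnt {ι : Type*} [Fintype ι] (u v : ι → ℝ) : ℝ :=
  ∑ k, u k * Real.log (u k / v k)

lemma my_cancel (c : ℝ) (hc : 0 < c) (y : EReal) :
    ((c⁻¹:ℝ):EReal) * (((c:ℝ):EReal) * y) = y := by
  induction y using EReal.rec with
  | bot => rw [EReal.coe_mul_bot_of_pos hc, EReal.coe_mul_bot_of_pos (inv_pos.2 hc)]
  | coe y => rw [← EReal.coe_mul, ← EReal.coe_mul, ← mul_assoc, inv_mul_cancel₀ hc.ne', one_mul]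
  | top => rw [EReal.coe_mul_top_of_pos hc, EReal.coe_mul_top_of_pos (inv_pos.2 hc)]

lemma my_mul_sInf (c : ℝ) (hc : 0 < c) (S : Set EReal) :
    ((c:ℝ):EReal) * sInf S = sInf ((fun y => ((c:ℝ):EReal) * y) '' S) := by
  have hc' : (0:EReal) ≤ (c:ℝ) := by exact_mod_cast hc.le
  have hci : (0:EReal) ≤ ((c⁻¹:ℝ):EReal) := by exact_mod_cast (inv_pos.2 hc).le
  apply le_antisymm
  · apply le_sInf
    rintro _ ⟨y, hy, rfl⟩
    exact mul_le_mul_of_nonneg_left (sInf_le hy) hc'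
  · have h1 : ((c⁻¹:ℝ):EReal) * sInf ((fun y => ((c:ℝ):EReal) * y) '' S) ≤ sInf S := by
      apply le_sInf
      intro y hy
      calc ((c⁻¹:ℝ):EReal) * sInf ((fun y => ((c:ℝ):EReal) * y) '' S)
          ≤ ((c⁻¹:ℝ):EReal) * (((c:ℝ):EReal) * y) :=
            mul_le_mul_of_nonneg_left (sInf_le ⟨y, hy, rfl⟩) hci
        _ = y := my_cancel c hc y
    calc sInf ((fun y => ((c:ℝ):EReal) * y) '' S)
        = ((c:ℝ):EReal) * (((c⁻¹:ℝ):EReal) * sInf ((fun y => ((c:ℝ):EReal) * y) '' S)) := by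
          have := my_cancel c⁻¹ (inv_pos.2 hc) (sInf ((fun y => ((c:ℝ):EReal) * y) '' S))
          rw [inv_inv] at this
          exact this.symm
      _ ≤ ((c:ℝ):EReal) * sInf S := mul_le_mul_of_nonneg_left h1 hc'


/-- Lemma 2: `β_x(p ⊕ 0, q ⊕ r) = β_x(p,q)` and `β_{x|r|}(p ⊗ r, q ⊗ r) = |r| β_x(p,q)`. -/
theorem stmt_1 {n m : ℕ} (p q : Fin n → ℝ) (r : Fin m → ℝ)
    (hp : ∀ i, 0 ≤ p i) (hq : ∀ i, 0 ≤ q i) (hr : ∀ i, 0 ≤ r i)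
    (hrpos : 0 < ∑ i, r i) (x : ℝ) :
    beta x (Sum.elim p (fun _ : Fin m => (0 : ℝ))) (Sum.elim q r) = beta x p q ∧
    beta (x * ∑ i, r i) (fun ik : Fin n × Fin m => p ik.1 * r ik.2)
        (fun ik : Fin n × Fin m => q ik.1 * r ik.2)
      = ((∑ i, r i : ℝ) : EReal) * beta x p q := by
  set c : ℝ := ∑ i, r i with hc
  constructor
  · -- part (i)
    apply le_antisymm
    · -- extension: S ⊆ S'
      apply sInf_le_sInf
      rintro y ⟨t, ht, hxp, rfl⟩
      refine ⟨Sum.elim t (fun _ => 0), ?_, ?_, ?_⟩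
      · rintro (i | k)
        · exact ht i
        · simp
      · simpa [dot, Fintype.sum_sum_type] using hxp
      · simp [dot, Fintype.sum_sum_type]
    · apply le_sInf
      rintro y ⟨t', ht', hxp, rfl⟩
      have hmem : ((dot (fun i => t' (Sum.inl i)) q : ℝ) : EReal) ∈
          {y : EReal | ∃ t : Fin n → ℝ, IsTest t ∧ x ≤ dot t p ∧
            y = ((dot t q : ℝ) : EReal)} := by
        refine ⟨fun i => t' (Sum.inl i), fun i => ht' (Sum.inl i), ?_, rfl⟩
        simpa [dot, Fintype.sum_sum_type] using hxp
      refine le_trans (sInf_le hmem) ?_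
      apply EReal.coe_le_coe_iff.2
      have : dot t' (Sum.elim q r) =
          dot (fun i => t' (Sum.inl i)) q + ∑ k, t' (Sum.inr k) * r k := by
        simp [dot, Fintype.sum_sum_type]
      rw [this]
      have : 0 ≤ ∑ k, t' (Sum.inr k) * r k :=
        Finset.sum_nonneg fun k _ => mul_nonneg (ht' (Sum.inr k)).1 (hr k)
      linarith
  · -- part (ii)
    have key : ∀ (T : Fin n × Fin m → ℝ) (v : Fin n → ℝ),
        dot (fun i => (∑ k, T (i, k) * r k) / c) v
          = (dot T (fun ik : Fin n × Fin m => v ik.1 * r ik.2)) / c := by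
      intro T v
      unfold dot
      rw [Fintype.sum_prod_type, Finset.sum_div]
      refine Finset.sum_congr rfl fun i _ => ?_
      rw [div_mul_eq_mul_div, Finset.sum_mul, Finset.sum_div, Finset.sum_div]
      exact Finset.sum_congr rfl fun k _ => by ring
    have key2 : ∀ (t v : Fin n → ℝ),
        dot (fun ik : Fin n × Fin m => t ik.1) (fun ik : Fin n × Fin m => v ik.1 * r ik.2)
          = dot t v * c := by
      intro t v
      unfold dot
      rw [Fintype.sum_prod_type, Finset.sum_mul]
      refine Finset.sum_congr rfl fun i _ => ?_
      rw [hc, Finset.mul_sum]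
      exact Finset.sum_congr rfl fun k _ => by ring
    unfold beta
    rw [my_mul_sInf c hrpos]
    congr 1
    ext y
    constructor
    · rintro ⟨T, hT, hxp, rfl⟩
      refine ⟨((dot (fun i => (∑ k, T (i, k) * r k) / c) q : ℝ) : EReal),
        ⟨fun i => (∑ k, T (i, k) * r k) / c, ?_, ?_, rfl⟩, ?_⟩
      · intro i
        constructor
        · exact div_nonneg (Finset.sum_nonneg fun k _ => mul_nonneg (hT (i, k)).1 (hr k))
            hrpos.le
        · rw [div_le_one hrpos]
          exact Finset.sum_le_sum fun k _ => by nlinarith [hr k, (hT (i, k)).2, (hT (i, k)).1]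
      · rw [key T p, le_div_iff₀ hrpos]
        exact hxp
      · rw [key T q]
        show ((c:ℝ):EReal) * (((dot T fun ik : Fin n × Fin m => q ik.1 * r ik.2) / c : ℝ) : EReal)
            = (((dot T fun ik : Fin n × Fin m => q ik.1 * r ik.2) : ℝ) : EReal)
        rw [← EReal.coe_mul]
        congr 1
        field_simp
    · rintro ⟨_, ⟨t, ht, hxp, rfl⟩, rfl⟩
      refine ⟨fun ik => t ik.1, fun ik => ht ik.1, ?_, ?_⟩
      · rw [key2 t p]
        exact mul_le_mul_of_nonneg_right hxp hrpos.le
      · rw [key2 t q]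
        show ((c:ℝ):EReal) * ((dot t q : ℝ) : EReal) = ((dot t q * c : ℝ) : EReal)
        rw [← EReal.coe_mul]
        congr 1
        ring
end

section
/- Let p,q ∈ ℝⁿ₊ and p',q' ∈ ℝⁿ'₊. Then (p,q) ≻ (p',q') holds if and only if there exists a substochastic n'×n matrix M with Mp = p' (equality) and Mq ≤ q' entrywise. -/
open scoped BigOperators

/-- `(p,q) ≻ (p',q')` iff there is a substochastic `M` with `Mp = p'` and `Mq ≤ q'`. -/
theorem stmt_2 {n n' : ℕ} (p q : Fin n → ℝ) (p' q' : Fin n' → ℝ)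
    (hp : ∀ i, 0 ≤ p i) (hq : ∀ i, 0 ≤ q i)
    (hp' : ∀ i, 0 ≤ p' i) (hq' : ∀ i, 0 ≤ q' i) :
    SubMaj p q p' q' ↔
      ∃ M : Matrix (Fin n') (Fin n) ℝ, Substochastic M ∧
        M.mulVec p = p' ∧ ∀ i, M.mulVec q i ≤ q' i := by
  constructor
  · rintro ⟨M, ⟨hMnn, hMcol⟩, hMp, hMq⟩
    set c : Fin n' → ℝ := fun i =>
      if M.mulVec p i = 0 then 0 else p' i / M.mulVec p i with hc
    have hMp0 : ∀ i, 0 ≤ M.mulVec p i := fun i => (hp' i).trans (hMp i)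
    have hMq0 : ∀ i, 0 ≤ M.mulVec q i := by
      intro i
      simp only [Matrix.mulVec, dotProduct]
      exact Finset.sum_nonneg fun j _ => mul_nonneg (hMnn i j) (hq j)
    have hc0 : ∀ i, 0 ≤ c i := by
      intro i
      simp only [hc]
      split
      · exact le_refl 0
      · exact div_nonneg (hp' i) (hMp0 i)
    have hc1 : ∀ i, c i ≤ 1 := by
      intro i
      simp only [hc]
      split
      · norm_num
      · next h =>
        exact div_le_one_of_le₀ (hMp i) (hMp0 i)
    have key : ∀ (v : Fin n → ℝ) i,
        Matrix.mulVec (fun i j => c i * M i j) v i = c i * M.mulVec v i := by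
      intro v i
      simp only [Matrix.mulVec, dotProduct]
      rw [Finset.mul_sum]
      exact Finset.sum_congr rfl fun j _ => (mul_assoc _ _ _)
    refine ⟨fun i j => c i * M i j, ⟨fun i j => mul_nonneg (hc0 i) (hMnn i j), ?_⟩, ?_, ?_⟩
    · intro j
      calc ∑ i, c i * M i j ≤ ∑ i, M i j :=
            Finset.sum_le_sum fun i _ => by
              calc c i * M i j ≤ 1 * M i j :=
                    mul_le_mul_of_nonneg_right (hc1 i) (hMnn i j)
                _ = M i j := one_mul _
        _ ≤ 1 := hMcol j
    · funext i
      rw [key]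
      by_cases h : M.mulVec p i = 0
      · have hp'0 : p' i = 0 := le_antisymm (h ▸ hMp i) (hp' i)
        simp [hc, h, hp'0]
      · simp only [hc, if_neg h]
        field_simp
    · intro i
      rw [key]
      calc c i * M.mulVec q i ≤ 1 * M.mulVec q i :=
            mul_le_mul_of_nonneg_right (hc1 i) (hMq0 i)
        _ = M.mulVec q i := one_mul _
        _ ≤ q' i := hMq i
  · rintro ⟨M, hM, hMp, hMq⟩
    exact ⟨M, hM, fun i => (congrFun hMp i).ge, hMq⟩
end

section
/- Let p,q ∈ ℝⁿ₊ and p',q' ∈ ℝⁿ'₊ with |q| > 0 and |q'| > 0, and set z = |q'|/|q| and s' = ((|p| − |p'|)/|q'|)·q' ∈ ℝⁿ'. Then (p,q) ≻ (p',q') holds if and only if (p ⊕ 0_n, q ⊕ zq) ≽ (p' ⊕ s', q' ⊕ z⁻¹q'), where ⊕ denotes concatenation of vectors and 0_n is the zero vector of length n. (Every instance of relative submajorization dilates to an instance of strict relative majorization.) -/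
open scoped BigOperators

/-!
Given a substochastic `M` with `M p ≥ p'` and `M q ≤ q'`, rescaling the rows of `M` by
`p' / M p ∈ [0, 1]` gives a substochastic `T` with `T p = p'` and still `T q ≤ q'`.
`T` is then completed to a stochastic matrix acting on two copies of the index sets: the column
deficits `1 - 1ᵀT` are sent to the second copy along `q'`, carrying the lost mass `|p| - |p'|`
of `p` and `|q| - |T q|` of `q`; the second copy `z q` of the input, of mass `|q'|`, refills the
slack `q' - T q` of the first copy and tops the second copy up to `z⁻¹ q'`.
Conversely, the top-left block of a stochastic dilation witnesses the submajorization.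
-/

open Matrix

variable {ι ι' : Type*} [Fintype ι]

lemma mulVec_nonneg {M : Matrix ι' ι ℝ} (hM : ∀ i j, 0 ≤ M i j) {v : ι → ℝ} (hv : 0 ≤ v) :
    0 ≤ M *ᵥ v :=
  fun i => Finset.sum_nonneg fun j _ => mul_nonneg (hM i j) (hv j)

variable [Fintype ι']

lemma Stochastic.substochastic {M : Matrix ι' ι ℝ} (hM : Stochastic M) : Substochastic M :=
  ⟨hM.1, fun j => (hM.2 j).le⟩

lemma stochastic_of_one_vecMul {M : Matrix ι' ι ℝ} (hM : ∀ i j, 0 ≤ M i j) (h : 1 ᵥ* M = 1) :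
    Stochastic M :=
  ⟨hM, fun j => by simpa [vecMul, dotProduct] using congrFun h j⟩

lemma Substochastic.one_vecMul_le {M : Matrix ι' ι ℝ} (hM : Substochastic M) : 1 ᵥ* M ≤ 1 :=
  fun j => by simpa [vecMul, dotProduct] using hM.2 j

lemma Substochastic.diagonal_mul {M : Matrix ι' ι ℝ} (hM : Substochastic M) [DecidableEq ι']
    {d : ι' → ℝ} (hd₀ : 0 ≤ d) (hd₁ : d ≤ 1) : Substochastic (diagonal d * M) := by
  refine ⟨fun i j => ?_, fun j => (Finset.sum_le_sum fun i _ => ?_).trans (hM.2 j)⟩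
  · rw [Matrix.diagonal_mul]
    exact mul_nonneg (hd₀ i) (hM.1 i j)
  · rw [Matrix.diagonal_mul]
    exact mul_le_of_le_one_left (hM.1 i j) (hd₁ i)

lemma RelMaj.subMaj {p q : ι → ℝ} {p' q' : ι' → ℝ} (h : RelMaj p q p' q') :
    SubMaj p q p' q' := by
  obtain ⟨M, hM, hMp, hMq⟩ := h
  exact ⟨M, hM.substochastic, fun i => (congrFun hMp i).ge, fun i => (congrFun hMq i).le⟩

lemma SubMaj.exists_mulVec_eq {p q : ι → ℝ} {p' q' : ι' → ℝ} (hq : 0 ≤ q) (hp' : 0 ≤ p')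
    (h : SubMaj p q p' q') :
    ∃ T : Matrix ι' ι ℝ, Substochastic T ∧ T *ᵥ p = p' ∧ T *ᵥ q ≤ q' := by
  classical
  obtain ⟨M, hM, hMp, hMq⟩ := h
  have hMp₀ : 0 ≤ M *ᵥ p := fun i => (hp' i).trans (hMp i)
  refine ⟨diagonal (p' / M *ᵥ p) * M,
    hM.diagonal_mul (fun i => div_nonneg (hp' i) (hMp₀ i))
      (fun i => div_le_one_of_le₀ (hMp i) (hMp₀ i)), ?_, fun i => ?_⟩
  · ext i
    rw [← mulVec_mulVec, mulVec_diagonal, Pi.div_apply]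
    -- `p' i = 0` wherever `(M *ᵥ p) i = 0`, so the junk value `x / 0 = 0` does no harm.
    exact div_mul_cancel_of_imp fun h0 => le_antisymm (h0 ▸ hMp i) (hp' i)
  · rw [← mulVec_mulVec, mulVec_diagonal, Pi.div_apply]
    exact (mul_le_of_le_one_left (mulVec_nonneg hM.1 hq i)
      (div_le_one_of_le₀ (hMp i) (hMp₀ i))).trans (hMq i)

noncomputable def dilation (T : Matrix ι' ι ℝ) (q : ι → ℝ) (q' : ι' → ℝ) :
    Matrix (ι' ⊕ ι') (ι ⊕ ι) ℝ :=
  fromBlocks T (vecMulVec ((∑ i, q' i)⁻¹ • (q' - T *ᵥ q)) 1)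
    (vecMulVec ((∑ i, q' i)⁻¹ • q') (1 - 1 ᵥ* T))
    (vecMulVec (((∑ i, (T *ᵥ q) i) / (∑ i, q' i) ^ 2) • q') 1)

section dilation

variable {T : Matrix ι' ι ℝ} {q : ι → ℝ} {q' : ι' → ℝ}

lemma one_vecMul_dilation (hq' : ∑ i, q' i ≠ 0) : 1 ᵥ* dilation T q q' = 1 := by
  rw [dilation, vecMul_fromBlocks, Pi.one_comp, Pi.one_comp, vecMul_vecMulVec, vecMul_vecMulVec,
    vecMul_vecMulVec, one_dotProduct, one_dotProduct, one_dotProduct]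
  simp only [Pi.smul_apply, Pi.sub_apply, smul_eq_mul, ← Finset.mul_sum, Finset.sum_sub_distrib]
  ext (j | j)
  · simp only [Sum.elim_inl, Pi.add_apply, Pi.smul_apply, Pi.sub_apply, smul_eq_mul, Pi.one_apply]
    field_simp
    ring
  · simp only [Sum.elim_inr, Pi.add_apply, Pi.smul_apply, smul_eq_mul, Pi.one_apply]
    field_simp
    ring

lemma dilation_nonneg (hT : Substochastic T) (hq : 0 ≤ q) (hq' : 0 ≤ q') (hTq : T *ᵥ q ≤ q') :
    ∀ i j, 0 ≤ dilation T q q' i j := by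
  have hS : 0 ≤ ∑ i, (T *ᵥ q) i := Finset.sum_nonneg fun i _ => mulVec_nonneg hT.1 hq i
  have hQ' : 0 ≤ ∑ i, q' i := Finset.sum_nonneg fun i _ => hq' i
  rintro (i | i) (j | j) <;> simp only [dilation, fromBlocks_apply₁₁, fromBlocks_apply₁₂,
    fromBlocks_apply₂₁, fromBlocks_apply₂₂, vecMulVec_apply, Pi.smul_apply, Pi.sub_apply,
    Pi.one_apply, smul_eq_mul, mul_one]
  · exact hT.1 i j
  · exact mul_nonneg (inv_nonneg.2 hQ') (sub_nonneg.2 (hTq i))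
  · exact mul_nonneg (mul_nonneg (inv_nonneg.2 hQ') (hq' i)) (sub_nonneg.2 (hT.one_vecMul_le j))
  · exact mul_nonneg (div_nonneg hS (pow_nonneg hQ' 2)) (hq' i)

lemma dilation_mulVec_sumElim_zero (p : ι → ℝ) :
    dilation T q q' *ᵥ Sum.elim p 0 =
      Sum.elim (T *ᵥ p) ((((∑ i, p i) - ∑ i, (T *ᵥ p) i) / ∑ i, q' i) • q') := by
  rw [dilation, fromBlocks_mulVec, Sum.elim_comp_inl, Sum.elim_comp_inr, mulVec_zero, mulVec_zero,
    add_zero, add_zero, vecMulVec_mulVec, op_smul_eq_smul, sub_dotProduct, ← dotProduct_mulVec,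
    one_dotProduct, one_dotProduct, smul_smul, div_eq_mul_inv]

lemma dilation_mulVec_sumElim_smul (hq' : ∑ i, q' i ≠ 0) {z : ℝ}
    (hz : z * ∑ i, q i = ∑ i, q' i) :
    dilation T q q' *ᵥ Sum.elim q (z • q) = Sum.elim q' (z⁻¹ • q') := by
  rw [dilation, fromBlocks_mulVec, Sum.elim_comp_inl, Sum.elim_comp_inr, vecMulVec_mulVec,
    vecMulVec_mulVec, vecMulVec_mulVec, op_smul_eq_smul, op_smul_eq_smul, op_smul_eq_smul,
    one_dotProduct, sub_dotProduct, ← dotProduct_mulVec, one_dotProduct, one_dotProduct]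
  simp only [Pi.smul_apply, smul_eq_mul, ← Finset.mul_sum, hz]
  have hz₀ : z ≠ 0 := left_ne_zero_of_mul (hz.trans_ne hq')
  ext (i | i)
  · simp only [Sum.elim_inl, Pi.add_apply, Pi.smul_apply, Pi.sub_apply, smul_eq_mul]
    field_simp
    ring
  · simp only [Sum.elim_inr, Pi.add_apply, Pi.smul_apply, smul_eq_mul]
    field_simp
    rw [← hz]
    ring

end dilation

lemma SubMaj.relMaj_sumElim {p q : ι → ℝ} {p' q' : ι' → ℝ} (h : SubMaj p q p' q') (hq : 0 ≤ q)
    (hp' : 0 ≤ p') (hq' : 0 ≤ q') (hQ' : 0 < ∑ i, q' i) {z : ℝ} (hz : z * ∑ i, q i = ∑ i, q' i) :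
    RelMaj (Sum.elim p 0) (Sum.elim q (z • q))
      (Sum.elim p' ((((∑ i, p i) - ∑ i, p' i) / ∑ i, q' i) • q')) (Sum.elim q' (z⁻¹ • q')) := by
  obtain ⟨T, hT, hTp, hTq⟩ := h.exists_mulVec_eq hq hp'
  refine ⟨dilation T q q', stochastic_of_one_vecMul (dilation_nonneg hT hq hq' hTq)
    (one_vecMul_dilation hQ'.ne'), ?_, dilation_mulVec_sumElim_smul hQ'.ne' hz⟩
  rw [dilation_mulVec_sumElim_zero, hTp]

lemma SubMaj.of_sumElim {p q w : ι → ℝ} {p' q' s' w' : ι' → ℝ} (hw : 0 ≤ w)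
    (h : SubMaj (Sum.elim p 0) (Sum.elim q w) (Sum.elim p' s') (Sum.elim q' w')) :
    SubMaj p q p' q' := by
  obtain ⟨N, hN, hNp, hNq⟩ := h
  refine ⟨N.toBlocks₁₁, ⟨fun i j => hN.1 _ _, fun j => ?_⟩, fun i => ?_, fun i => ?_⟩
  · calc ∑ i, N.toBlocks₁₁ i j
        ≤ ∑ i, N (.inl i) (.inl j) + ∑ i, N (.inr i) (.inl j) :=
          le_add_of_nonneg_right (Finset.sum_nonneg fun i _ => hN.1 _ _)
      _ = ∑ i, N i (.inl j) := (Fintype.sum_sum_type fun i => N i (.inl j)).symm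
      _ ≤ 1 := hN.2 _
  · have := hNp (.inl i)
    rw [← fromBlocks_toBlocks N, fromBlocks_mulVec] at this
    simpa using this
  · have hBw : 0 ≤ (N.toBlocks₁₂ *ᵥ w) i := mulVec_nonneg (fun _ _ => hN.1 _ _) hw i
    have := hNq (.inl i)
    rw [← fromBlocks_toBlocks N, fromBlocks_mulVec] at this
    simp only [Sum.elim_inl, Sum.elim_comp_inl, Sum.elim_comp_inr, Pi.add_apply] at this
    linarith

theorem stmt_3_general {n n' : ℕ} (p q : Fin n → ℝ) (p' q' : Fin n' → ℝ)
    (hq : ∀ i, 0 ≤ q i)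
    (hp' : ∀ i, 0 ≤ p' i) (hq' : ∀ i, 0 ≤ q' i)
    (hqpos : 0 < ∑ i, q i) (hq'pos : 0 < ∑ i, q' i) :
    SubMaj p q p' q' ↔
      RelMaj (Sum.elim p (fun _ : Fin n => (0 : ℝ)))
        (Sum.elim q (fun i => ((∑ j, q' j) / (∑ j, q j)) * q i))
        (Sum.elim p' (fun i => (((∑ j, p j) - (∑ j, p' j)) / (∑ j, q' j)) * q' i))
        (Sum.elim q' (fun i => ((∑ j, q' j) / (∑ j, q j))⁻¹ * q' i)) :=
  have hz : (∑ j, q' j) / (∑ j, q j) * ∑ j, q j = ∑ j, q' j := div_mul_cancel₀ _ hqpos.ne'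
  ⟨fun h => h.relMaj_sumElim hq hp' hq' hq'pos hz,
    fun h => h.subMaj.of_sumElim fun i => mul_nonneg (div_nonneg hq'pos.le hqpos.le) (hq i)⟩

/-- Every instance of relative submajorization dilates to an instance of strict
relative majorization. -/
theorem stmt_3 {n n' : ℕ} (p q : Fin n → ℝ) (p' q' : Fin n' → ℝ)
    (hp : ∀ i, 0 ≤ p i) (hq : ∀ i, 0 ≤ q i)
    (hp' : ∀ i, 0 ≤ p' i) (hq' : ∀ i, 0 ≤ q' i)
    (hqpos : 0 < ∑ i, q i) (hq'pos : 0 < ∑ i, q' i) :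
    SubMaj p q p' q' ↔
      RelMaj (Sum.elim p (fun _ : Fin n => (0 : ℝ)))
        (Sum.elim q (fun i => ((∑ j, q' j) / (∑ j, q j)) * q i))
        (Sum.elim p' (fun i => (((∑ j, p j) - (∑ j, p' j)) / (∑ j, q' j)) * q' i))
        (Sum.elim q' (fun i => ((∑ j, q' j) / (∑ j, q j))⁻¹ * q' i)) :=
  stmt_3_general p q p' q' hq hp' hq' hqpos hq'pos
end

section
/- Let p,q ∈ ℝⁿ₊ and p',q' ∈ ℝⁿ'₊. Then (p,q) ≻ (p',q') holds if and only if β_x(p,q) ≤ β_x(p',q') for all x ∈ ℝ (equivalently, for all x ∈ [0, |p'|]). -/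
open scoped BigOperators

/-!
Forward: a substochastic `M` turns a test `t'` on the target into the test `t' ᵥ* M` on the
source with at least the same `p`-weight and at most the same `q`-weight. Backward: since `β` is
attained, ordered `β`-curves mean that every target test is dominated by a source test, and for the
threshold tests this gives `∑ (p'ᵢ - τ q'ᵢ)⁺ ≤ ∑ (pⱼ - τ qⱼ)⁺` for all `τ ≥ 0`. If no substochastic
`M` existed, Hahn–Banach would separate `(p', q')` from the compact convex set of pairs
`(M p, M q)` by a functional `u ⬝ᵥ a - v ⬝ᵥ b` with `u, v ≥ 0`. On the positive quadrant the upper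
envelope of `0` and the lines `u i * a - v i * b` is a nonnegative combination of hinges
`(a - τ b)⁺`, so the hinge inequalities contradict the separation.
-/

open Matrix

section Tests

variable {ι ι' : Type*} [Fintype ι] [Fintype ι']

theorem dot_eq_dotProduct (t p : ι → ℝ) : dot t p = t ⬝ᵥ p := rfl

theorem continuous_dot_left (p : ι → ℝ) : Continuous fun t : ι → ℝ => dot t p := by
  fun_prop [dot]

theorem isCompact_setOf_isTest : IsCompact {t : ι → ℝ | IsTest t} := by
  convert isCompact_univ_pi fun _ : ι => isCompact_Icc (a := (0 : ℝ)) (b := 1) using 1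
  ext t
  simp [IsTest, Pi.le_def, forall_and]

theorem IsTest.vecMul {t' : ι' → ℝ} (ht' : IsTest t') {M : Matrix ι' ι ℝ}
    (hM : Substochastic M) : IsTest (t' ᵥ* M) := fun j =>
  ⟨Finset.sum_nonneg fun i _ => mul_nonneg (ht' i).1 (hM.1 i j),
    calc ∑ i, t' i * M i j ≤ ∑ i, M i j :=
          Finset.sum_le_sum fun i _ => mul_le_of_le_one_left (hM.1 i j) (ht' i).2
      _ ≤ 1 := hM.2 j⟩

def TestsDominate (p q : ι → ℝ) (p' q' : ι' → ℝ) : Prop :=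
  ∀ t', IsTest t' → ∃ t, IsTest t ∧ dot t' p' ≤ dot t p ∧ dot t q ≤ dot t' q'

theorem SubMaj.testsDominate {p q : ι → ℝ} {p' q' : ι' → ℝ} (h : SubMaj p q p' q') :
    TestsDominate p q p' q' := by
  obtain ⟨M, hM, hMp, hMq⟩ := h
  intro t' ht'
  refine ⟨t' ᵥ* M, ht'.vecMul hM, ?_, ?_⟩ <;>
    simp only [dot_eq_dotProduct, ← dotProduct_mulVec] <;>
    exact dotProduct_le_dotProduct_of_nonneg_left (by assumption) fun i => (ht' i).1

theorem exists_test_of_beta_le {p q : ι → ℝ} {x c : ℝ} (h : beta x p q ≤ c) :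
    ∃ t, IsTest t ∧ x ≤ dot t p ∧ dot t q ≤ c := by
  set T := {t : ι → ℝ | IsTest t ∧ x ≤ dot t p}
  have hS : {y : EReal | ∃ t, IsTest t ∧ x ≤ dot t p ∧ y = dot t q} =
      (fun t => ((dot t q : ℝ) : EReal)) '' T := by
    ext y
    simp [T, and_assoc, eq_comm]
  have hT : IsCompact T :=
    isCompact_setOf_isTest.inter_right (isClosed_le continuous_const (continuous_dot_left p))
  rw [beta, hS] at h
  obtain hTe | hTne := T.eq_empty_or_nonempty
  · simp [hTe] at h
  obtain ⟨t, ⟨ht, hxt⟩, hts⟩ :=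
    (hT.image (continuous_coe_real_ereal.comp (continuous_dot_left q))).sInf_mem (hTne.image _)
  exact ⟨t, ht, hxt, EReal.coe_le_coe_iff.1 ((le_of_eq hts).trans h)⟩

theorem forall_beta_le_iff_testsDominate {p q : ι → ℝ} {p' q' : ι' → ℝ} :
    (∀ x, beta x p q ≤ beta x p' q') ↔ TestsDominate p q p' q' := by
  constructor
  · intro h t' ht'
    obtain ⟨t, ht, hp, hq⟩ := exists_test_of_beta_le <|
      (h (dot t' p')).trans (sInf_le ⟨t', ht', le_rfl, rfl⟩)
    exact ⟨t, ht, hp, hq⟩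
  · rintro h x
    refine le_sInf ?_
    rintro _ ⟨t', ht', hx, rfl⟩
    obtain ⟨t, ht, hp, hq⟩ := h t' ht'
    calc beta x p q ≤ (dot t q : EReal) := sInf_le ⟨t, ht, hx.trans hp, rfl⟩
      _ ≤ dot t' q' := EReal.coe_le_coe_iff.2 hq

end Tests

section Hinges

variable {ι : Type*}

def upperEnvelope (u v : ι → ℝ) (s : Finset ι) (a b : ℝ) : ℝ :=
  s.fold max 0 fun i => u i * a - v i * b

def hingeSum (c τ : ι → ℝ) (s : Finset ι) (a b : ℝ) : ℝ :=
  ∑ i ∈ s, c i * max (a - τ i * b) 0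

theorem le_upperEnvelope {u v : ι → ℝ} {s : Finset ι} {i : ι} (hi : i ∈ s) (a b : ℝ) :
    u i * a - v i * b ≤ upperEnvelope u v s a b :=
  (Finset.le_fold_max _).2 (Or.inr ⟨i, hi, le_rfl⟩)

theorem upperEnvelope_mul (u v : ι → ℝ) (s : Finset ι) {r : ℝ} (hr : 0 ≤ r) (a b : ℝ) :
    upperEnvelope u v s (r * a) (r * b) = r * upperEnvelope u v s a b := by
  rw [upperEnvelope, upperEnvelope, ← Finset.fold_hom (fun x y => mul_max_of_nonneg x y hr),
    mul_zero]
  congr 1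
  ext i
  ring

theorem hingeSum_mul (c τ : ι → ℝ) (s : Finset ι) {r : ℝ} (hr : 0 ≤ r) (a b : ℝ) :
    hingeSum c τ s (r * a) (r * b) = r * hingeSum c τ s a b := by
  rw [hingeSum, hingeSum, Finset.mul_sum]
  refine Finset.sum_congr rfl fun i _ => ?_
  rw [show r * a - τ i * (r * b) = r * (a - τ i * b) by ring, ← mul_zero r,
    ← mul_max_of_nonneg _ _ hr, mul_zero]
  ring

theorem sum_hinge_sub_le {s : Finset ι} {c : ι → ℝ} (hc : ∀ i, 0 ≤ c i) (τ : ι → ℝ) {x y : ℝ}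
    (hxy : x ≤ y) :
    ∑ i ∈ s, c i * max (y - τ i) 0 - ∑ i ∈ s, c i * max (x - τ i) 0 ≤ (∑ i ∈ s, c i) * (y - x) := by
  simp only [← Finset.sum_sub_distrib, Finset.sum_mul, ← mul_sub]
  refine Finset.sum_le_sum fun i _ => mul_le_mul_of_nonneg_left ?_ (hc i)
  rw [max_def, max_def]
  split_ifs <;> linarith

/-- Past a crossing point `τ₀` of a hinge sum with a steeper line, the line wins, so the hinges to
the right of `τ₀` are replaced by a single hinge at `τ₀`. -/
theorem max_line_sum_hinge_eq_of_crossing {s : Finset ι} {c τ : ι → ℝ} {u₀ v₀ τ₀ : ℝ}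
    (hmono : Monotone fun x => u₀ * x - v₀ - ∑ i ∈ s, c i * max (x - τ i) 0)
    (hτ₀ : u₀ * τ₀ - v₀ = ∑ i ∈ s, c i * max (τ₀ - τ i) 0) (x : ℝ) :
    max (u₀ * x - v₀) (∑ i ∈ s, c i * max (x - τ i) 0) =
      ∑ i ∈ s, (if τ i ≤ τ₀ then c i else 0) * max (x - τ i) 0 +
        (u₀ - ∑ i ∈ s, if τ i ≤ τ₀ then c i else 0) * max (x - τ₀) 0 := by
  have h_left : ∀ x ≤ τ₀, ∑ i ∈ s, (if τ i ≤ τ₀ then c i else 0) * max (x - τ i) 0 =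
      ∑ i ∈ s, c i * max (x - τ i) 0 := fun x hx => Finset.sum_congr rfl fun i _ => by
    split_ifs with h
    · rfl
    · rw [max_eq_right (by linarith), mul_zero, mul_zero]
  rcases le_total x τ₀ with hx | hx
  · have := hmono hx
    dsimp only at this
    rw [max_eq_right (by linarith), h_left x hx, max_eq_right (by linarith), mul_zero, add_zero]
  · have := hmono hx
    dsimp only at this
    have h_right : ∑ i ∈ s, (if τ i ≤ τ₀ then c i else 0) * max (x - τ i) 0 =
        ∑ i ∈ s, (if τ i ≤ τ₀ then c i else 0) * max (τ₀ - τ i) 0 +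
          (∑ i ∈ s, if τ i ≤ τ₀ then c i else 0) * (x - τ₀) := by
      rw [Finset.sum_mul, ← Finset.sum_add_distrib]
      refine Finset.sum_congr rfl fun i _ => ?_
      split_ifs with h
      · rw [max_eq_left (by linarith), max_eq_left (by linarith)]
        ring
      · ring
    rw [max_eq_left (by linarith), h_right, h_left τ₀ le_rfl, max_eq_left (by linarith)]
    linarith

theorem exists_max_line_sum_hinge_eq {s : Finset ι} {c τ : ι → ℝ} (hc : ∀ i, 0 ≤ c i)
    (hτ : ∀ i, 0 ≤ τ i) {u₀ v₀ : ℝ} (hu₀ : ∑ i ∈ s, c i ≤ u₀) (hv₀ : 0 ≤ v₀) :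
    ∃ (τ₀ : ℝ) (c₁ : ι → ℝ), 0 ≤ τ₀ ∧ (∀ i, 0 ≤ c₁ i) ∧ ∑ i ∈ s, c₁ i ≤ u₀ ∧ ∀ x, 0 ≤ x →
      max (u₀ * x - v₀) (∑ i ∈ s, c i * max (x - τ i) 0) =
        ∑ i ∈ s, c₁ i * max (x - τ i) 0 + (u₀ - ∑ i ∈ s, c₁ i) * max (x - τ₀) 0 := by
  set g : ℝ → ℝ := fun x => ∑ i ∈ s, c i * max (x - τ i) 0
  have hg0 : g 0 = 0 :=
    Finset.sum_eq_zero fun i _ => by rw [max_eq_right (by linarith [hτ i]), mul_zero]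
  have hmono : Monotone fun x => u₀ * x - v₀ - g x := fun x y hxy => by
    nlinarith [sum_hinge_sub_le (s := s) hc τ hxy]
  by_cases hcross : ∃ x₁, 0 ≤ x₁ ∧ g x₁ ≤ u₀ * x₁ - v₀
  · obtain ⟨x₁, hx₁, hgx₁⟩ := hcross
    obtain ⟨τ₀, ⟨hτ₀, -⟩, hτ₀_eq⟩ : ∃ τ₀ ∈ Set.Icc 0 x₁, u₀ * τ₀ - v₀ - g τ₀ = 0 :=
      intermediate_value_Icc hx₁ (by fun_prop) ⟨by simp [hg0, hv₀], by linarith⟩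
    have hc₁ : ∀ i, 0 ≤ (if τ i ≤ τ₀ then c i else 0) := fun i => by
      split_ifs <;> simp [hc i]
    have hc₁_le : ∀ i, (if τ i ≤ τ₀ then c i else 0) ≤ c i := fun i => by
      split_ifs <;> simp [hc i]
    exact ⟨τ₀, _, hτ₀, hc₁, (Finset.sum_le_sum fun i _ => hc₁_le i).trans hu₀,
      fun x _ => max_line_sum_hinge_eq_of_crossing hmono (by linarith) x⟩
  · push Not at hcross
    have hσ : u₀ = ∑ i ∈ s, c i := by
      refine le_antisymm (not_lt.1 fun hσu => ?_) hu₀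
      set x := v₀ / (u₀ - ∑ i ∈ s, c i)
      have hx : 0 ≤ x := div_nonneg hv₀ (by linarith)
      have hx_eq : (u₀ - ∑ i ∈ s, c i) * x = v₀ := mul_div_cancel₀ _ (by linarith)
      have := sum_hinge_sub_le (s := s) hc τ hx
      nlinarith [hcross x hx]
    refine ⟨0, c, le_rfl, hc, hu₀, fun x hx => ?_⟩
    rw [max_eq_right (hcross x hx).le, ← hσ, sub_self, zero_mul, add_zero]

theorem exists_hingeSum_eq_upperEnvelope_one {u v : ι → ℝ} (hu : ∀ i, 0 ≤ u i)
    (hv : ∀ i, 0 ≤ v i) (s : Finset ι) :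
    ∃ c τ : ι → ℝ, (∀ i, 0 ≤ c i) ∧ (∀ i, 0 ≤ τ i) ∧ ∑ i ∈ s, c i = s.fold max 0 u ∧
      ∀ x, 0 ≤ x → upperEnvelope u v s x 1 = hingeSum c τ s x 1 := by
  classical
  induction s using Finset.induction_on_max_value u with
  | empty => exact ⟨0, 0, fun _ => le_rfl, fun _ => le_rfl, rfl, by simp [upperEnvelope, hingeSum]⟩
  | insert a s ha hmax ih =>
    obtain ⟨c, τ, hc, hτ, hσ, hrep⟩ := ih
    have hσa : ∑ i ∈ s, c i ≤ u a := hσ ▸ (Finset.fold_max_le _).2 ⟨hu a, hmax⟩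
    obtain ⟨τ₀, c₁, hτ₀, hc₁, hc₁_le, heq⟩ := exists_max_line_sum_hinge_eq hc hτ hσa (hv a)
    have hne : ∀ i ∈ s, i ≠ a := fun i hi h => ha (h ▸ hi)
    refine ⟨Function.update c₁ a (u a - ∑ i ∈ s, c₁ i), Function.update τ a τ₀, fun i => ?_,
      fun i => ?_, ?_, fun x hx => ?_⟩
    · rcases eq_or_ne i a with rfl | h
      · simpa using hc₁_le
      · simpa [h] using hc₁ i
    · rcases eq_or_ne i a with rfl | h
      · simpa using hτ₀
      · simpa [h] using hτ i
    · rw [Finset.sum_insert ha, Finset.fold_insert ha, max_eq_left (hσ ▸ hσa),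
        Finset.sum_congr rfl fun i hi => Function.update_of_ne (hne i hi) _ _]
      simp
    · have hs : ∑ i ∈ s, Function.update c₁ a (u a - ∑ i ∈ s, c₁ i) i *
            max (x - Function.update τ a τ₀ i) 0 = ∑ i ∈ s, c₁ i * max (x - τ i) 0 :=
        Finset.sum_congr rfl fun i hi => by
          rw [Function.update_of_ne (hne i hi), Function.update_of_ne (hne i hi)]
      rw [upperEnvelope, Finset.fold_insert ha, ← upperEnvelope, hrep x hx]
      simp only [hingeSum, mul_one, Finset.sum_insert ha, Function.update_self]
      rw [heq x hx, hs]
      ring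

theorem exists_hingeSum_eq_upperEnvelope {u v : ι → ℝ} (hu : ∀ i, 0 ≤ u i)
    (hv : ∀ i, 0 ≤ v i) (s : Finset ι) :
    ∃ c τ : ι → ℝ, (∀ i, 0 ≤ c i) ∧ (∀ i, 0 ≤ τ i) ∧
      ∀ a b, 0 ≤ a → 0 ≤ b → upperEnvelope u v s a b = hingeSum c τ s a b := by
  obtain ⟨c, τ, hc, hτ, hσ, hrep⟩ := exists_hingeSum_eq_upperEnvelope_one hu hv s
  refine ⟨c, τ, hc, hτ, fun a b ha hb => ?_⟩
  rcases hb.eq_or_lt with rfl | hb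
  · calc upperEnvelope u v s a 0 = upperEnvelope u v s (a * 1) (a * 0) := by simp
      _ = a * hingeSum c τ s 1 0 := by
        rw [upperEnvelope_mul u v s ha]
        simp [upperEnvelope, hingeSum, hσ]
      _ = hingeSum c τ s a 0 := by simp [← hingeSum_mul c τ s ha]
  · calc upperEnvelope u v s a b = upperEnvelope u v s (b * (a / b)) (b * 1) := by
          rw [mul_div_cancel₀ _ hb.ne', mul_one]
      _ = hingeSum c τ s (b * (a / b)) (b * 1) := by
          rw [upperEnvelope_mul u v s hb.le, hingeSum_mul c τ s hb.le,
            hrep _ (div_nonneg ha hb.le)]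
      _ = hingeSum c τ s a b := by rw [mul_div_cancel₀ _ hb.ne', mul_one]

end Hinges

theorem Finset.exists_weights_sum_mul_eq_fold_max {ι : Type*} (s : Finset ι) (f : ι → ℝ) :
    ∃ w : ι → ℝ, (∀ i, 0 ≤ w i) ∧ ∑ i ∈ s, w i ≤ 1 ∧ ∑ i ∈ s, w i * f i = s.fold max 0 f := by
  classical
  obtain rfl | hs := s.eq_empty_or_nonempty
  · exact ⟨0, fun _ => le_rfl, by simp, by simp⟩
  obtain ⟨i, hi, hmax⟩ := s.exists_max_image f hs
  have hfold : s.fold max 0 f = max (f i) 0 :=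
    le_antisymm
      ((fold_max_le _).2 ⟨le_max_right _ _, fun j hj => (hmax j hj).trans (le_max_left _ _)⟩)
      (max_le ((le_fold_max _).2 (Or.inr ⟨i, hi, le_rfl⟩)) ((le_fold_max _).2 (Or.inl le_rfl)))
  refine ⟨Pi.single i (if 0 ≤ f i then 1 else 0), fun j => ?_, ?_, ?_⟩
  · rw [Pi.single_apply]
    split_ifs <;> norm_num
  · rw [Finset.sum_pi_single', if_pos hi]
    split_ifs <;> norm_num
  · simp only [Pi.single_apply, ite_mul, zero_mul, Finset.sum_ite_eq', if_pos hi, hfold]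
    split_ifs with h
    · rw [one_mul, max_eq_left h]
    · rw [max_eq_right (not_le.1 h).le]

theorem nonneg_of_forall_lt_add_mul {a b c : ℝ} (h : ∀ s, 0 ≤ s → c < a + s * b) : 0 ≤ b := by
  by_contra! hb
  have hs : 0 ≤ (a - c) / -b := div_nonneg (by linarith [h 0 le_rfl]) (by linarith)
  have := h _ hs
  rw [div_mul_eq_mul_div, div_neg, mul_div_cancel_right₀ _ hb.ne] at this
  linarith

theorem StrongDual.apply_prod_eq_sum {ι : Type*} [Fintype ι] [DecidableEq ι]
    (f : StrongDual ℝ ((ι → ℝ) × (ι → ℝ))) (a b : ι → ℝ) :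
    f (a, b) = ∑ i, a i * f (Pi.single i 1, 0) + ∑ i, b i * f (0, Pi.single i 1) := by
  have h : (a, b) = ∑ i, a i • ((Pi.single i 1 : ι → ℝ), (0 : ι → ℝ)) +
      ∑ i, b i • ((0 : ι → ℝ), (Pi.single i 1 : ι → ℝ)) := by
    ext j <;> simp [Prod.fst_sum, Prod.snd_sum, Finset.sum_apply, Pi.single_apply]
  simp only [h, map_add, map_sum, map_smul, smul_eq_mul]

section Separation

variable {ι ι' : Type*} [Fintype ι] [Fintype ι']

theorem isCompact_setOf_substochastic : IsCompact {M : Matrix ι' ι ℝ | Substochastic M} := by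
  refine (isCompact_univ_pi fun _ : ι' =>
    isCompact_univ_pi fun _ : ι => isCompact_Icc (a := (0 : ℝ)) (b := 1)).of_isClosed_subset ?_
      fun M hM i _ j _ => ⟨hM.1 i j, (Finset.single_le_sum (fun i _ => hM.1 i j)
        (Finset.mem_univ i)).trans (hM.2 j)⟩
  simp only [Substochastic, Set.ofPred_and, Set.ofPred_forall]
  exact (isClosed_iInter fun i => isClosed_iInter fun j =>
      isClosed_le continuous_const (by fun_prop)).inter
    (isClosed_iInter fun j => isClosed_le (by fun_prop) continuous_const)

theorem convex_setOf_substochastic : Convex ℝ {M : Matrix ι' ι ℝ | Substochastic M} := by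
  intro M hM N hN a b ha hb hab
  refine ⟨fun i j => ?_, fun j => ?_⟩
  · simp only [Matrix.add_apply, Matrix.smul_apply, smul_eq_mul]
    exact add_nonneg (mul_nonneg ha (hM.1 i j)) (mul_nonneg hb (hN.1 i j))
  · simp only [Matrix.add_apply, Matrix.smul_apply, smul_eq_mul, Finset.sum_add_distrib,
      ← Finset.mul_sum]
    nlinarith [hM.2 j, hN.2 j]

/-- The signs of `u` and `v` come from the set `Ici p' ×ˢ Iic q'` being unbounded in the
directions `(eᵢ, 0)` and `(0, -eᵢ)`. -/
theorem exists_lines_of_not_subMaj {p q : ι → ℝ} {p' q' : ι' → ℝ} (h : ¬ SubMaj p q p' q') :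
    ∃ u v : ι' → ℝ, (∀ i, 0 ≤ u i) ∧ (∀ i, 0 ≤ v i) ∧ ∀ M : Matrix ι' ι ℝ, Substochastic M →
      u ⬝ᵥ (M *ᵥ p) - v ⬝ᵥ (M *ᵥ q) < u ⬝ᵥ p' - v ⬝ᵥ q' := by
  classical
  have hΦ : IsLinearMap ℝ fun M : Matrix ι' ι ℝ => (M *ᵥ p, M *ᵥ q) :=
    ⟨fun M N => by simp [Matrix.add_mulVec], fun c M => by simp [Matrix.smul_mulVec]⟩
  have hdisj : Disjoint ((fun M : Matrix ι' ι ℝ => (M *ᵥ p, M *ᵥ q)) ''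
      {M | Substochastic M}) (Set.Ici p' ×ˢ Set.Iic q') := by
    rw [Set.disjoint_left]
    rintro _ ⟨M, hM, rfl⟩ ⟨hp', hq'⟩
    exact h ⟨M, hM, hp', hq'⟩
  obtain ⟨f, r₁, r₂, hfK, hr, hfD⟩ := geometric_hahn_banach_compact_closed
    (convex_setOf_substochastic.is_linear_image hΦ)
    (isCompact_setOf_substochastic.image (by fun_prop))
    ((convex_Ici p').prod (convex_Iic q')) (isClosed_Ici.prod isClosed_Iic) hdisj
  set u : ι' → ℝ := fun i => f (Pi.single i 1, 0)
  set v : ι' → ℝ := fun i => -f (0, Pi.single i 1)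
  have hf : ∀ a b, f (a, b) = u ⬝ᵥ a - v ⬝ᵥ b := fun a b => by
    rw [f.apply_prod_eq_sum, sub_eq_add_neg, dotProduct, dotProduct, ← Finset.sum_neg_distrib]
    congr 1 <;> exact Finset.sum_congr rfl fun i _ => by simp only [u, v]; ring
  have hu : ∀ i, 0 ≤ u i := fun i =>
    nonneg_of_forall_lt_add_mul (a := u ⬝ᵥ p' - v ⬝ᵥ q') (c := r₂) fun s hs => by
      have := hfD (p' + Pi.single i s, q')
        ⟨Set.mem_Ici.2 (le_add_of_nonneg_right (Pi.single_nonneg.2 hs)), Set.self_mem_Iic⟩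
      rw [hf, dotProduct_add, dotProduct_single] at this
      linarith
  have hv : ∀ i, 0 ≤ v i := fun i =>
    nonneg_of_forall_lt_add_mul (a := u ⬝ᵥ p' - v ⬝ᵥ q') (c := r₂) fun s hs => by
      have := hfD (p', q' - Pi.single i s)
        ⟨Set.self_mem_Ici, Set.mem_Iic.2 (sub_le_self _ (Pi.single_nonneg.2 hs))⟩
      rw [hf, dotProduct_sub, dotProduct_single] at this
      linarith
  refine ⟨u, v, hu, hv, fun M hM => ?_⟩
  have := (hfK _ ⟨M, hM, rfl⟩).trans (hr.trans (hfD (p', q') ⟨Set.self_mem_Ici, Set.self_mem_Iic⟩))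
  rwa [hf, hf] at this

theorem exists_substochastic_eq_sum_upperEnvelope (u v : ι' → ℝ) (p q : ι → ℝ) :
    ∃ M : Matrix ι' ι ℝ, Substochastic M ∧
      u ⬝ᵥ (M *ᵥ p) - v ⬝ᵥ (M *ᵥ q) = ∑ j, upperEnvelope u v Finset.univ (p j) (q j) := by
  choose w hw_nonneg hw_sum hw_eq using fun j =>
    Finset.univ.exists_weights_sum_mul_eq_fold_max fun i => u i * p j - v i * q j
  refine ⟨Matrix.of fun i j => w j i, ⟨fun i j => hw_nonneg j i, hw_sum⟩, ?_⟩
  simp only [upperEnvelope, ← hw_eq, dotProduct, Matrix.mulVec, Matrix.of_apply,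
    Finset.mul_sum, ← Finset.sum_sub_distrib]
  rw [Finset.sum_comm]
  exact Finset.sum_congr rfl fun j _ => Finset.sum_congr rfl fun i _ => by ring

end Separation

namespace TestsDominate

variable {ι ι' : Type*} [Fintype ι] [Fintype ι'] {p q : ι → ℝ} {p' q' : ι' → ℝ}

theorem sum_max_sub_mul_le (H : TestsDominate p q p' q') {τ : ℝ} (hτ : 0 ≤ τ) :
    ∑ i, max (p' i - τ * q' i) 0 ≤ ∑ j, max (p j - τ * q j) 0 := by
  classical
  set t' : ι' → ℝ := fun i => if 0 ≤ p' i - τ * q' i then 1 else 0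
  obtain ⟨t, ht, htp, htq⟩ := H t' fun i => by simp only [t']; split_ifs <;> norm_num
  calc ∑ i, max (p' i - τ * q' i) 0 = dot t' p' - τ * dot t' q' := by
        rw [dot, dot, Finset.mul_sum, ← Finset.sum_sub_distrib]
        refine Finset.sum_congr rfl fun i _ => ?_
        simp only [t']
        split_ifs with h
        · rw [max_eq_left h]; ring
        · rw [max_eq_right (not_le.1 h).le]; ring
    _ ≤ dot t p - τ * dot t q := by linarith [mul_le_mul_of_nonneg_left htq hτ]
    _ = ∑ j, t j * (p j - τ * q j) := by
        rw [dot, dot, Finset.mul_sum, ← Finset.sum_sub_distrib]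
        exact Finset.sum_congr rfl fun j _ => by ring
    _ ≤ ∑ j, max (p j - τ * q j) 0 := Finset.sum_le_sum fun j _ => by
        rcases le_total 0 (p j - τ * q j) with h | h
        · rw [max_eq_left h]; exact mul_le_of_le_one_left h (ht j).2
        · rw [max_eq_right h]; exact mul_nonpos_of_nonneg_of_nonpos (ht j).1 h

theorem sum_hingeSum_le {κ : Type*} (H : TestsDominate p q p' q') {c τ : κ → ℝ}
    (hc : ∀ k, 0 ≤ c k) (hτ : ∀ k, 0 ≤ τ k) (s : Finset κ) :
    ∑ i, hingeSum c τ s (p' i) (q' i) ≤ ∑ j, hingeSum c τ s (p j) (q j) := by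
  simp only [hingeSum]
  rw [Finset.sum_comm, Finset.sum_comm (s := Finset.univ)]
  refine Finset.sum_le_sum fun k _ => ?_
  rw [← Finset.mul_sum, ← Finset.mul_sum]
  exact mul_le_mul_of_nonneg_left (H.sum_max_sub_mul_le (hτ k)) (hc k)

theorem subMaj (H : TestsDominate p q p' q') (hp : ∀ j, 0 ≤ p j) (hq : ∀ j, 0 ≤ q j)
    (hp' : ∀ i, 0 ≤ p' i) (hq' : ∀ i, 0 ≤ q' i) : SubMaj p q p' q' := by
  by_contra hns
  obtain ⟨u, v, hu, hv, hsep⟩ := exists_lines_of_not_subMaj hns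
  obtain ⟨c, τ, hc, hτ, hrep⟩ := exists_hingeSum_eq_upperEnvelope hu hv Finset.univ
  obtain ⟨M, hM, hMval⟩ := exists_substochastic_eq_sum_upperEnvelope u v p q
  refine (hsep M hM).not_ge ?_
  calc u ⬝ᵥ (M *ᵥ p) - v ⬝ᵥ (M *ᵥ q)
      = ∑ j, hingeSum c τ Finset.univ (p j) (q j) := by
        rw [hMval]
        exact Finset.sum_congr rfl fun j _ => hrep _ _ (hp j) (hq j)
    _ ≥ ∑ i, hingeSum c τ Finset.univ (p' i) (q' i) := H.sum_hingeSum_le hc hτ _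
    _ = ∑ i, upperEnvelope u v Finset.univ (p' i) (q' i) :=
        Finset.sum_congr rfl fun i _ => (hrep _ _ (hp' i) (hq' i)).symm
    _ ≥ ∑ i, (u i * p' i - v i * q' i) :=
        Finset.sum_le_sum fun i _ => le_upperEnvelope (Finset.mem_univ i) _ _
    _ = u ⬝ᵥ p' - v ⬝ᵥ q' := by rw [Finset.sum_sub_distrib]; rfl

end TestsDominate

/-- `(p,q) ≻ (p',q')` iff the Lorenz curves are ordered: `β_x(p,q) ≤ β_x(p',q')` for all `x`. -/
theorem stmt_4 {n n' : ℕ} (p q : Fin n → ℝ) (p' q' : Fin n' → ℝ)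
    (hp : ∀ i, 0 ≤ p i) (hq : ∀ i, 0 ≤ q i)
    (hp' : ∀ i, 0 ≤ p' i) (hq' : ∀ i, 0 ≤ q' i) :
    SubMaj p q p' q' ↔ ∀ x : ℝ, beta x p q ≤ beta x p' q' := by
  rw [forall_beta_le_iff_testsDominate]
  exact ⟨SubMaj.testsDominate, fun H => H.subMaj hp hq hp' hq'⟩
end

section
/- Let (u_k, v_k) ∈ ℝ²₊ for k = 1,…,n. Then there exist triples (a_j, b_j, c_j) ∈ ℝ³₊, j = 1,…,n, such that for all x ≥ 0: max_{1≤k≤n} (u_k x − v_k y)₊ ≥ Σ_{j=1}^n a_j (b_j x − c_j y)₊ for every y ∈ ℝ, with equality whenever y ≥ 0. Here (t)₊ := max(t,0). -/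
open scoped BigOperators

/-!
Write `s = y / x`. On a ray `y = s x` every angle function is `x` times the positive part of an
affine, nonincreasing function of `s`, so the maximum is `x` times a convex, nonincreasing,
piecewise linear function of `s`. Walking along `s ≥ 0` from the line leading at `s = 0`, one
passes from the current line `p` to the line `q` of smaller slope that crosses it first; the
jump is the angle function `(p - q)₊`, which vanishes beyond the crossing. Summing these jumps
reproduces the maximum for `s ≥ 0` (each line of the chain is removed from the list, so at most
`n` angle functions occur), while for `s ≤ 0` the sum is the leading angle function alone.
-/

noncomputable section

namespace AngleFun

def lin (ℓ : ℝ × ℝ) (x y : ℝ) : ℝ := ℓ.1 * x - ℓ.2 * y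

def angle (ℓ : ℝ × ℝ) (x y : ℝ) : ℝ := max (lin ℓ x y) 0

def envelope {ι : Type*} (L : ι → ℝ × ℝ) (x y : ℝ) : ℝ := ⨆ k, angle (L k) x y

/-- The value `y / x` at which `lin p` and `lin q` agree. -/
def crossing (p q : ℝ × ℝ) : ℝ := (p.1 - q.1) / (p.2 - q.2)

lemma lin_sub (p q : ℝ × ℝ) (x y : ℝ) : lin (p - q) x y = lin p x y - lin q x y := by
  simp only [lin, Prod.fst_sub, Prod.snd_sub]; ring

lemma lin_nonpos_of_mul_le {ℓ : ℝ × ℝ} (hℓ : 0 ≤ ℓ.2) {t x y : ℝ} (ht : lin ℓ 1 t ≤ 0)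
    (hx : 0 ≤ x) (hy : t * x ≤ y) : lin ℓ x y ≤ 0 := by
  simp only [lin] at *; nlinarith

lemma lin_nonneg_of_le_mul {ℓ : ℝ × ℝ} (hℓ : 0 ≤ ℓ.2) {t x y : ℝ} (ht : 0 ≤ lin ℓ 1 t)
    (hx : 0 ≤ x) (hy : y ≤ t * x) : 0 ≤ lin ℓ x y := by
  simp only [lin] at *; nlinarith

lemma lin_crossing {p q : ℝ × ℝ} (h : q.2 < p.2) : lin (p - q) 1 (crossing p q) = 0 := by
  simp only [lin, crossing, Prod.fst_sub, Prod.snd_sub]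
  field_simp [(sub_pos.2 h).ne']
  ring

lemma le_crossing_iff {p q : ℝ × ℝ} (h : q.2 < p.2) {t : ℝ} :
    t ≤ crossing p q ↔ 0 ≤ lin (p - q) 1 t := by
  simp only [lin, crossing, Prod.fst_sub, Prod.snd_sub, le_div_iff₀ (sub_pos.2 h)]
  constructor <;> intro <;> linarith

lemma angle_nonneg (ℓ : ℝ × ℝ) (x y : ℝ) : 0 ≤ angle ℓ x y := le_max_right _ _

@[simp] lemma angle_zero (x y : ℝ) : angle 0 x y = 0 := by simp [angle, lin]

section envelope

variable {ι : Type*} (L : ι → ℝ × ℝ) (x y : ℝ)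

lemma le_envelope [Finite ι] (k : ι) : angle (L k) x y ≤ envelope L x y :=
  le_ciSup (Finite.bddAbove_range fun k => angle (L k) x y) k

lemma envelope_nonneg : 0 ≤ envelope L x y := Real.iSup_nonneg fun _ => angle_nonneg _ _ _

lemma envelope_le {a : ℝ} (h : ∀ k, angle (L k) x y ≤ a) (ha : 0 ≤ a) : envelope L x y ≤ a :=
  Real.iSup_le h ha

end envelope

lemma envelope_eq_max_succAbove {m : ℕ} (L : Fin (m + 1) → ℝ × ℝ) (k : Fin (m + 1)) (x y : ℝ) :
    envelope L x y = max (angle (L k) x y) (envelope (L ∘ k.succAbove) x y) := by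
  refine le_antisymm
    (envelope_le _ _ _ (fun j => ?_) ((angle_nonneg _ _ _).trans (le_max_left _ _)))
    (max_le (le_envelope L x y k)
      (envelope_le _ _ _ (fun j => le_envelope L x y _) (envelope_nonneg L x y)))
  rcases eq_or_ne j k with rfl | hj
  · exact le_max_left _ _
  · obtain ⟨j, rfl⟩ := Fin.exists_succAbove_eq hj
    exact le_max_of_le_right (le_envelope (L ∘ k.succAbove) x y j)

/-- `∑ j, (h j)₊` represents the maximum of `p₊` and the `(S k)₊` in the sense of the theorem,
with the half-lines `y = s x` split at `s = s₀` instead of `s = 0`. -/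
def HingeRep {m : ℕ} (s₀ : ℝ) (p : ℝ × ℝ) (S : Fin m → ℝ × ℝ) (h : Fin (m + 1) → ℝ × ℝ) :
    Prop :=
  0 ≤ h ∧ ∀ x y, 0 ≤ x →
    (y ≤ s₀ * x → ∑ j, angle (h j) x y = angle p x y) ∧
    (s₀ * x ≤ y → ∑ j, angle (h j) x y = max (angle p x y) (envelope S x y))

lemma hingeRep_single {m : ℕ} {s₀ : ℝ} {p : ℝ × ℝ} (hp : 0 ≤ p) {S : Fin m → ℝ × ℝ}
    (hdom : ∀ k x y, 0 ≤ x → s₀ * x ≤ y → lin (S k) x y ≤ angle p x y) :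
    HingeRep s₀ p S (Fin.cons p 0) := by
  have hsum : ∀ x y, ∑ j, angle ((Fin.cons p 0 : Fin (m + 1) → ℝ × ℝ) j) x y = angle p x y :=
    fun x y => by simp [Fin.sum_univ_succ]
  refine ⟨fun j => Fin.cases hp (fun _ => le_rfl) j,
    fun x y hx => ⟨fun _ => hsum x y, fun hy => ?_⟩⟩
  rw [hsum, eq_comm, max_eq_left_iff]
  exact envelope_le _ _ _ (fun k => max_le (hdom k x y hx hy) (angle_nonneg _ _ _))
    (angle_nonneg _ _ _)

lemma hingeRep_cons {m : ℕ} {s₀ t : ℝ} (hs₀ : 0 ≤ s₀) (hst : s₀ ≤ t) {p : ℝ × ℝ}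
    {S : Fin (m + 1) → ℝ × ℝ} {k : Fin (m + 1)} (hqp : (S k).2 < p.2) (hS : 0 ≤ S k)
    (hcross : lin (p - S k) 1 t = 0) (hpt : 0 < lin p 1 t)
    (hstrip : ∀ j x y, 0 ≤ x → s₀ * x ≤ y → y ≤ t * x → lin (S j) x y ≤ lin p x y)
    {h : Fin (m + 1) → ℝ × ℝ} (hrep : HingeRep t (S k) (S ∘ k.succAbove) h) :
    HingeRep s₀ p S (Fin.cons (p - S k) h) := by
  set q := S k
  have hdiff : 0 ≤ (p - q).2 := (sub_pos.2 hqp).le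
  have hq_pos : 0 < lin q 1 t := by rw [lin_sub] at hcross; linarith
  -- up to the crossing, the sum is `(p - q) + q = p`
  have hleft : ∀ x y, 0 ≤ x → y ≤ t * x →
      ∑ j, angle ((Fin.cons (p - q) h : Fin (m + 2) → ℝ × ℝ) j) x y = lin p x y ∧
        0 ≤ lin p x y := by
    intro x y hx hy
    have hpq := lin_nonneg_of_le_mul hdiff hcross.ge hx hy
    have hq := lin_nonneg_of_le_mul hS.2 hq_pos.le hx hy
    rw [Fin.sum_univ_succ, Fin.cons_zero]
    simp only [Fin.cons_succ]
    rw [(hrep.2 x y hx).1 hy, angle, angle, max_eq_left hpq, max_eq_left hq, lin_sub]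
    constructor <;> linarith [lin_sub p q x y]
  have hpq_nonneg : 0 ≤ p - q := by
    refine ⟨?_, hdiff⟩
    have : (p - q).1 = (p - q).2 * t := by simp only [lin, mul_one] at hcross; linarith
    rw [this]; exact mul_nonneg hdiff (hs₀.trans hst)
  refine ⟨fun j => Fin.cases hpq_nonneg hrep.1 j, fun x y hx => ⟨fun hy => ?_, fun hy => ?_⟩⟩
  · have hy' : y ≤ t * x := hy.trans (mul_le_mul_of_nonneg_right hst hx)
    obtain ⟨hsum, hp⟩ := hleft x y hx hy'
    rw [hsum, angle, max_eq_left hp]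
  · rcases le_total y (t * x) with hyt | hyt
    · obtain ⟨hsum, hp⟩ := hleft x y hx hyt
      rw [hsum, angle, max_eq_left hp, eq_comm, max_eq_left_iff]
      exact envelope_le _ _ _ (fun j => max_le (hstrip j x y hx hy hyt) hp) hp
    · have hpq := lin_nonpos_of_mul_le hdiff hcross.le hx hyt
      rw [Fin.sum_univ_succ, Fin.cons_zero, angle, max_eq_right hpq, zero_add]
      simp only [Fin.cons_succ]
      have hpq' : angle p x y ≤ angle q x y :=
        max_le_max (by linarith [lin_sub p q x y]) le_rfl
      rw [(hrep.2 x y hx).2 hyt, envelope_eq_max_succAbove S k, ← max_assoc, max_eq_right hpq']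

theorem exists_hingeRep {m : ℕ} {s₀ : ℝ} (hs₀ : 0 ≤ s₀) {p : ℝ × ℝ} (hp : 0 ≤ p)
    {S : Fin m → ℝ × ℝ} (hS : 0 ≤ S) (hdom : ∀ k, lin (S k) 1 s₀ ≤ lin p 1 s₀) :
    ∃ h, HingeRep s₀ p S h := by
  induction m generalizing s₀ p with
  | zero => exact ⟨_, hingeRep_single hp fun k => k.elim0⟩
  | succ m ih =>
    have hflat : ∀ j x y, p.2 ≤ (S j).2 → 0 ≤ x → s₀ * x ≤ y → lin (S j) x y ≤ lin p x y := by
      intro j x y hj hx hy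
      have := lin_nonpos_of_mul_le (ℓ := S j - p) (sub_nonneg.2 hj)
        (by rw [lin_sub]; linarith [hdom j]) hx hy
      rw [lin_sub] at this; linarith
    by_cases hsteep : (Finset.univ.filter fun j => (S j).2 < p.2).Nonempty
    · obtain ⟨k, hk, hmin⟩ := Finset.exists_min_image _ (fun j => crossing p (S j)) hsteep
      rw [Finset.mem_filter] at hk
      set t := crossing p (S k)
      have hstrip : ∀ j x y, 0 ≤ x → s₀ * x ≤ y → y ≤ t * x → lin (S j) x y ≤ lin p x y := by
        intro j x y hx hy hyt
        rcases lt_or_ge (S j).2 p.2 with hj | hj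
        · have := lin_nonneg_of_le_mul (sub_pos.2 hj).le
            ((le_crossing_iff hj).1 (hmin j (by simpa using hj))) hx hyt
          rw [lin_sub] at this; linarith
        · exact hflat j x y hj hx hy
      have hst : s₀ ≤ t := (le_crossing_iff hk.2).2 (by rw [lin_sub]; linarith [hdom k])
      have hdom_t : ∀ j, lin (S j) 1 t ≤ lin p 1 t :=
        fun j => hstrip j 1 t zero_le_one (by simpa using hst) (by simp)
      rcases le_or_gt (lin p 1 t) 0 with hpt | hpt
      · refine ⟨_, hingeRep_single hp fun j x y hx hy => ?_⟩
        rcases le_total y (t * x) with hyt | hyt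
        · exact (hstrip j x y hx hy hyt).trans (le_max_left _ _)
        · exact (lin_nonpos_of_mul_le (hS j).2 ((hdom_t j).trans hpt) hx hyt).trans
            (angle_nonneg _ _ _)
      · have hcross := lin_crossing hk.2
        have hpq_t : lin p 1 t = lin (S k) 1 t := by rw [lin_sub] at hcross; linarith
        obtain ⟨h, hrep⟩ := ih (hs₀.trans hst) (hS k) (fun j => hS _)
          (fun j => (hdom_t _).trans hpq_t.le)
        exact ⟨_, hingeRep_cons hs₀ hst hk.2 (hS k) hcross hpt hstrip hrep⟩
    · refine ⟨_, hingeRep_single hp fun j x y hx hy => ?_⟩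
      have hj : p.2 ≤ (S j).2 := not_lt.1 fun hj => hsteep ⟨j, by simpa using hj⟩
      exact (hflat j x y hj hx hy).trans (le_max_left _ _)

end AngleFun

end

open AngleFun in
/-- A maximum of finitely many angle functions `(x,y) ↦ (u_k x − v_k y)₊` agrees on the
positive quadrant with a nonnegative linear combination of angle functions, and dominates
it for `x ≥ 0`, `y < 0`. -/
theorem stmt_7 {n : ℕ} (u v : Fin n → ℝ) (hu : ∀ k, 0 ≤ u k) (hv : ∀ k, 0 ≤ v k) :
    ∃ a b c : Fin n → ℝ, (∀ j, 0 ≤ a j) ∧ (∀ j, 0 ≤ b j) ∧ (∀ j, 0 ≤ c j) ∧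
      ∀ x : ℝ, 0 ≤ x →
        (∀ y : ℝ, (∑ j, a j * max (b j * x - c j * y) 0)
            ≤ ⨆ k : Fin n, max (u k * x - v k * y) 0) ∧
        (∀ y : ℝ, 0 ≤ y →
          (⨆ k : Fin n, max (u k * x - v k * y) 0)
            = ∑ j, a j * max (b j * x - c j * y) 0) := by
  cases n with
  | zero => exact ⟨0, 0, 0, by simp, by simp, by simp, fun x _ => by simp⟩
  | succ m =>
    set L : Fin (m + 1) → ℝ × ℝ := fun k => (u k, v k)
    obtain ⟨i, -, hi⟩ := Finset.univ.exists_max_image u Finset.univ_nonempty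
    obtain ⟨h, hh, hrep⟩ := exists_hingeRep le_rfl (p := L i) ⟨hu i, hv i⟩
      (S := L ∘ i.succAbove) (fun k => ⟨hu _, hv _⟩)
      (fun k => by simpa [lin, L] using hi _ (Finset.mem_univ _))
    refine ⟨1, fun j => (h j).1, fun j => (h j).2, fun _ => zero_le_one, fun j => (hh j).1,
      fun j => (hh j).2, fun x hx => ?_⟩
    have hsum : ∀ y, ∑ j, (1 : Fin (m + 1) → ℝ) j * max ((h j).1 * x - (h j).2 * y) 0
        = ∑ j, angle (h j) x y := fun y => by simp [angle, lin]
    have henv : ∀ y, (⨆ k, max (u k * x - v k * y) 0) = envelope L x y := fun _ => rfl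
    have hquad : ∀ y, 0 ≤ y → ∑ j, angle (h j) x y = envelope L x y := fun y hy => by
      rw [(hrep x y hx).2 (by simpa using hy), envelope_eq_max_succAbove L i]
    simp only [hsum, henv]
    refine ⟨fun y => ?_, fun y hy => (hquad y hy).symm⟩
    rcases le_total y 0 with hy | hy
    · rw [(hrep x y hx).1 (by simpa using hy)]
      exact le_envelope L x y i
    · exact (hquad y hy).le
end

section
/- Let (p,q) be a normalized pair in ℝⁿ₊ (|p| = |q| = 1) with q strictly positive entrywise, and let λ ∈ [0,1] and z ≥ 0. Then (p,q) ≻ (λp, zq) holds if and only if λ ≤ min(z, 1). (Equivalently, λ*_z(R→R) = z for z ≤ 1 and λ*_z(R→R) = 1 for z > 1.) -/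
open scoped BigOperators

/-- For a normalized pair with strictly positive `q`, `(p,q) ≻ (λp, zq)` iff `λ ≤ min z 1`. -/
theorem stmt_10 {n : ℕ} (p q : Fin n → ℝ)
    (hp : ∀ i, 0 ≤ p i) (hq : ∀ i, 0 < q i)
    (hpn : ∑ i, p i = 1) (hqn : ∑ i, q i = 1)
    (lam z : ℝ) (hlam0 : 0 ≤ lam) (hlam1 : lam ≤ 1) (hz : 0 ≤ z) :
    SubMaj p q (fun i => lam * p i) (fun i => z * q i) ↔ lam ≤ min z 1 := by
  have hne : (Finset.univ : Finset (Fin n)).Nonempty := by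
    rcases (Finset.univ : Finset (Fin n)).eq_empty_or_nonempty with h | h
    · rw [h, Finset.sum_empty] at hpn; norm_num at hpn
    · exact h
  constructor
  · rintro ⟨M, ⟨hMnn, hMcol⟩, hMp, hMq⟩
    refine le_min ?_ hlam1
    by_contra hzl
    push_neg at hzl
    have hlpos : 0 < lam := lt_of_le_of_lt hz hzl
    have mono : ∀ (u v : Fin n → ℝ), (∀ j, u j ≤ v j) →
        ∀ i, M.mulVec u i ≤ M.mulVec v i := by
      intro u v huv i
      simp only [Matrix.mulVec, dotProduct]
      exact Finset.sum_le_sum fun j _ => mul_le_mul_of_nonneg_left (huv j) (hMnn i j)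
    have lin : ∀ (c : ℝ) (u : Fin n → ℝ) (i : Fin n),
        M.mulVec (fun j => c * u j) i = c * M.mulVec u i := by
      intro c u i
      simp only [Matrix.mulVec, dotProduct, Finset.mul_sum]
      exact Finset.sum_congr rfl fun j _ => by ring
    have key : ∀ k : ℕ, (∀ i j, 0 ≤ (M ^ k) i j) ∧
        (∀ i, lam ^ k * p i ≤ (M ^ k).mulVec p i) ∧
        (∀ i, (M ^ k).mulVec q i ≤ z ^ k * q i) := by
      intro k
      induction k with
      | zero =>
        refine ⟨fun i j => ?_, fun i => ?_, fun i => ?_⟩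
        · rw [pow_zero]
          rw [Matrix.one_apply]
          split <;> norm_num
        · simp [Matrix.one_mulVec]
        · simp [Matrix.one_mulVec]
      | succ k ih =>
        obtain ⟨ihnn, ihp, ihq⟩ := ih
        have hpow : M ^ (k + 1) = M * M ^ k := by rw [pow_succ']
        refine ⟨fun i j => ?_, fun i => ?_, fun i => ?_⟩
        · rw [hpow, Matrix.mul_apply]
          exact Finset.sum_nonneg fun l _ => mul_nonneg (hMnn i l) (ihnn l j)
        · rw [hpow, ← Matrix.mulVec_mulVec]
          calc lam ^ (k + 1) * p i = lam ^ k * (lam * p i) := by ring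
            _ ≤ lam ^ k * M.mulVec p i :=
                mul_le_mul_of_nonneg_left (hMp i) (pow_nonneg hlam0 k)
            _ = M.mulVec (fun j => lam ^ k * p j) i := (lin _ _ _).symm
            _ ≤ M.mulVec ((M ^ k).mulVec p) i := mono _ _ ihp i
        · rw [hpow, ← Matrix.mulVec_mulVec]
          calc M.mulVec ((M ^ k).mulVec q) i
              ≤ M.mulVec (fun j => z ^ k * q j) i := mono _ _ ihq i
            _ = z ^ k * M.mulVec q i := lin _ _ _
            _ ≤ z ^ k * (z * q i) :=
                mul_le_mul_of_nonneg_left (hMq i) (pow_nonneg hz k)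
            _ = z ^ (k + 1) * q i := by ring
    set qmin : ℝ := Finset.univ.inf' hne q with hqmin_def
    have hqmin_le : ∀ j, qmin ≤ q j := fun j => Finset.inf'_le q (Finset.mem_univ j)
    have hqmin_pos : 0 < qmin := by
      rw [hqmin_def, Finset.lt_inf'_iff]
      exact fun i _ => hq i
    have hratio : z / lam < 1 := (div_lt_one hlpos).mpr hzl
    obtain ⟨k, hk⟩ := exists_pow_lt_of_lt_one hqmin_pos hratio
    obtain ⟨hNnn, hNp, hNq⟩ := key k
    set N := M ^ k with hN
    -- lam^k * qmin ≤ z^k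
    have hp1 : ∀ j, p j ≤ 1 := by
      intro j
      rw [← hpn]
      exact Finset.single_le_sum (fun i _ => hp i) (Finset.mem_univ j)
    have step1 : lam ^ k ≤ ∑ i, N.mulVec p i := by
      calc lam ^ k = ∑ i, lam ^ k * p i := by rw [← Finset.mul_sum, hpn, mul_one]
        _ ≤ ∑ i, N.mulVec p i := Finset.sum_le_sum fun i _ => hNp i
    have hswap_p : ∑ i, N.mulVec p i = ∑ j, (∑ i, N i j) * p j := by
      simp only [Matrix.mulVec, dotProduct]
      rw [Finset.sum_comm]
      exact Finset.sum_congr rfl fun j _ => (Finset.sum_mul _ _ _).symm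
    have hswap_q : ∑ i, N.mulVec q i = ∑ j, (∑ i, N i j) * q j := by
      simp only [Matrix.mulVec, dotProduct]
      rw [Finset.sum_comm]
      exact Finset.sum_congr rfl fun j _ => (Finset.sum_mul _ _ _).symm
    have step2 : (∑ j, (∑ i, N i j) * p j) * qmin ≤ ∑ j, (∑ i, N i j) * q j := by
      rw [Finset.sum_mul]
      refine Finset.sum_le_sum fun j _ => ?_
      rw [mul_assoc]
      refine mul_le_mul_of_nonneg_left ?_ (Finset.sum_nonneg fun i _ => hNnn i j)
      calc p j * qmin ≤ 1 * qmin :=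
            mul_le_mul_of_nonneg_right (hp1 j) hqmin_pos.le
        _ = qmin := one_mul _
        _ ≤ q j := hqmin_le j
    have step3 : ∑ i, N.mulVec q i ≤ z ^ k := by
      calc ∑ i, N.mulVec q i ≤ ∑ i, z ^ k * q i := Finset.sum_le_sum fun i _ => hNq i
        _ = z ^ k := by rw [← Finset.mul_sum, hqn, mul_one]
    have hfinal : lam ^ k * qmin ≤ z ^ k := by
      calc lam ^ k * qmin ≤ (∑ i, N.mulVec p i) * qmin :=
            mul_le_mul_of_nonneg_right step1 hqmin_pos.le
        _ = (∑ j, (∑ i, N i j) * p j) * qmin := by rw [hswap_p]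
        _ ≤ ∑ j, (∑ i, N i j) * q j := step2
        _ = ∑ i, N.mulVec q i := hswap_q.symm
        _ ≤ z ^ k := step3
    have hzk : z ^ k = (z / lam) ^ k * lam ^ k := by
      rw [div_pow, div_mul_cancel₀]
      exact pow_ne_zero k (ne_of_gt hlpos)
    have hlk : 0 < lam ^ k := pow_pos hlpos k
    have : lam ^ k * qmin < qmin * lam ^ k := by
      calc lam ^ k * qmin ≤ z ^ k := hfinal
        _ = (z / lam) ^ k * lam ^ k := hzk
        _ < qmin * lam ^ k := mul_lt_mul_of_pos_right hk hlk
    rw [mul_comm] at this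
    exact lt_irrefl _ this
  · intro h
    have hlz : lam ≤ z := le_trans h (min_le_left _ _)
    refine ⟨lam • (1 : Matrix (Fin n) (Fin n) ℝ), ⟨?_, ?_⟩, ?_, ?_⟩
    · intro i j
      simp only [Matrix.smul_apply, Matrix.one_apply, smul_eq_mul]
      split <;> simp [hlam0]
    · intro j
      simp [Matrix.smul_apply, Matrix.one_apply, Finset.sum_ite_eq, hlam1]
    · intro i
      rw [Matrix.smul_mulVec, Matrix.one_mulVec]
      simp
    · intro i
      rw [Matrix.smul_mulVec, Matrix.one_mulVec]
      exact mul_le_mul_of_nonneg_right hlz (hq i).le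
end

section
/- Let (p,q) in ℝⁿ₊ and (p',q') in ℝⁿ'₊ be normalized pairs (|p| = |q| = |p'| = |q'| = 1) and let λ ∈ [0,1]. Then the following are equivalent: (a) there exists s' ∈ ℝⁿ'₊ with |s'| = 1 such that (p,q) ≽ (λp' + (1−λ)s', q'); (b) (p,q) ≻ (λp', q'). (A probabilistic transformation exists as a mixture exactly when the corresponding relative submajorization holds.) -/
open scoped BigOperators

/-- A probabilistic transformation exists as a mixture exactly when the corresponding
relative submajorization holds. -/
theorem stmt_12 {n n' : ℕ} (p q : Fin n → ℝ) (p' q' : Fin n' → ℝ)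
    (hp : ∀ i, 0 ≤ p i) (hq : ∀ i, 0 ≤ q i)
    (hp' : ∀ i, 0 ≤ p' i) (hq' : ∀ i, 0 ≤ q' i)
    (hpn : ∑ i, p i = 1) (hqn : ∑ i, q i = 1)
    (hpn' : ∑ i, p' i = 1) (hqn' : ∑ i, q' i = 1)
    (lam : ℝ) (hlam0 : 0 ≤ lam) (hlam1 : lam ≤ 1) :
    (∃ s' : Fin n' → ℝ, (∀ i, 0 ≤ s' i) ∧ (∑ i, s' i) = 1 ∧
        RelMaj p q (fun i => lam * p' i + (1 - lam) * s' i) q') ↔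
      SubMaj p q (fun i => lam * p' i) q' := by
  classical
  have mulVec_apply : ∀ {m k : ℕ} (A : Matrix (Fin m) (Fin k) ℝ) (v : Fin k → ℝ) (i : Fin m),
      A.mulVec v i = ∑ j, A i j * v j := by
    intro m k A v i
    simp [Matrix.mulVec, dotProduct]
  constructor
  · rintro ⟨s', hs0, _, M, hM, hMp, hMq⟩
    refine ⟨M, ⟨hM.1, fun j => le_of_eq (hM.2 j)⟩, fun i => ?_,
      fun i => le_of_eq (congrFun hMq i)⟩
    have h1 : M.mulVec p i = lam * p' i + (1 - lam) * s' i := congrFun hMp i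
    have h2 : 0 ≤ (1 - lam) * s' i := mul_nonneg (by linarith) (hs0 i)
    show lam * p' i ≤ M.mulVec p i
    linarith
  · rintro ⟨M, hMsub, hMlp, hMq⟩
    have hn' : Nonempty (Fin n') := by
      rcases Nat.eq_zero_or_pos n' with h | h
      · subst h; simp at hpn'
      · exact ⟨⟨0, h⟩⟩
    obtain ⟨i0⟩ := hn'
    have hMp0 : ∀ i, 0 ≤ M.mulVec p i := fun i => by
      rw [mulVec_apply]
      exact Finset.sum_nonneg fun j _ => mul_nonneg (hMsub.1 i j) (hp j)
    have hMq0 : ∀ i, 0 ≤ M.mulVec q i := fun i => by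
      rw [mulVec_apply]
      exact Finset.sum_nonneg fun j _ => mul_nonneg (hMsub.1 i j) (hq j)
    set c : Fin n' → ℝ := fun i => if M.mulVec p i = 0 then 0 else lam * p' i / M.mulVec p i
      with hc
    have hc0 : ∀ i, 0 ≤ c i := by
      intro i
      rw [hc]; dsimp only
      split_ifs with h
      · exact le_refl 0
      · exact div_nonneg (mul_nonneg hlam0 (hp' i)) (hMp0 i)
    have hc1 : ∀ i, c i ≤ 1 := by
      intro i
      rw [hc]; dsimp only
      split_ifs with h
      · norm_num
      · have hpos : 0 < M.mulVec p i := lt_of_le_of_ne (hMp0 i) (Ne.symm h)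
        exact (div_le_one hpos).mpr (hMlp i)
    set M1 : Matrix (Fin n') (Fin n) ℝ := fun i j => c i * M i j with hM1
    have hM1mul : ∀ (v : Fin n → ℝ) (i), M1.mulVec v i = c i * M.mulVec v i := by
      intro v i
      rw [mulVec_apply, mulVec_apply, Finset.mul_sum]
      exact Finset.sum_congr rfl fun j _ => by rw [hM1]; ring
    have hM1p : ∀ i, M1.mulVec p i = lam * p' i := by
      intro i
      rw [hM1mul]
      by_cases h : M.mulVec p i = 0
      · have h0 : lam * p' i = 0 :=
          le_antisymm (h ▸ hMlp i) (mul_nonneg hlam0 (hp' i))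
        rw [h, h0, mul_zero]
      · rw [hc]; dsimp only
        rw [if_neg h, div_mul_cancel₀ _ h]
    have hM1q0 : ∀ i, 0 ≤ M1.mulVec q i := fun i => by
      rw [hM1mul]; exact mul_nonneg (hc0 i) (hMq0 i)
    have hM1q : ∀ i, M1.mulVec q i ≤ q' i := fun i => by
      rw [hM1mul]
      calc c i * M.mulVec q i ≤ 1 * M.mulVec q i :=
            mul_le_mul_of_nonneg_right (hc1 i) (hMq0 i)
        _ = M.mulVec q i := one_mul _
        _ ≤ q' i := hMq i
    have hM1nn : ∀ i j, 0 ≤ M1 i j := fun i j => mul_nonneg (hc0 i) (hMsub.1 i j)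
    have hM1col : ∀ j, ∑ i, M1 i j ≤ 1 := by
      intro j
      calc ∑ i, M1 i j ≤ ∑ i, M i j :=
            Finset.sum_le_sum fun i _ => by
              calc M1 i j = c i * M i j := rfl
                _ ≤ 1 * M i j := mul_le_mul_of_nonneg_right (hc1 i) (hMsub.1 i j)
                _ = M i j := one_mul _
        _ ≤ 1 := hMsub.2 j
    set d : Fin n → ℝ := fun j => 1 - ∑ i, M1 i j with hd
    have hd0 : ∀ j, 0 ≤ d j := fun j => by
      rw [hd]; dsimp only; linarith [hM1col j]
    set r : Fin n' → ℝ := fun i => q' i - M1.mulVec q i with hr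
    have hr0 : ∀ i, 0 ≤ r i := fun i => by
      rw [hr]; dsimp only; linarith [hM1q i]
    set R : ℝ := ∑ i, r i with hR
    have hR0 : 0 ≤ R := Finset.sum_nonneg fun i _ => hr0 i
    have sumswap : ∀ (A : Matrix (Fin n') (Fin n) ℝ) (v : Fin n → ℝ),
        ∑ i, A.mulVec v i = ∑ j, (∑ i, A i j) * v j := by
      intro A v
      simp only [mulVec_apply]
      rw [Finset.sum_comm]
      exact Finset.sum_congr rfl fun j _ => by rw [Finset.sum_mul]
    have hRq : R = ∑ j, d j * q j := by
      have h1 : ∑ j, d j * q j = ∑ j, q j - ∑ j, (∑ i, M1 i j) * q j := by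
        rw [← Finset.sum_sub_distrib]
        exact Finset.sum_congr rfl fun j _ => by rw [hd]; ring
      have h2 : ∑ i, M1.mulVec q i = ∑ j, (∑ i, M1 i j) * q j := sumswap M1 q
      have h3 : R = ∑ i, q' i - ∑ i, M1.mulVec q i := by
        rw [hR, ← Finset.sum_sub_distrib]
      rw [h3, h2, h1, hqn, hqn']
    set u : Fin n' → ℝ := if R = 0 then (fun i => if i = i0 then 1 else 0)
      else fun i => r i / R with hu
    have hu0 : ∀ i, 0 ≤ u i := by
      intro i
      rw [hu]
      split_ifs with h
      · dsimp only; split_ifs <;> norm_num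
      · exact div_nonneg (hr0 i) hR0
    have husum : ∑ i, u i = 1 := by
      rw [hu]
      split_ifs with h
      · simp
      · rw [← Finset.sum_div, ← hR, div_self h]
    have hur : ∀ i, u i * R = r i := by
      intro i
      rw [hu]
      split_ifs with h
      · have : r i = 0 := by
          have := (Finset.sum_eq_zero_iff_of_nonneg (fun i _ => hr0 i)).mp (hR ▸ h)
          exact this i (Finset.mem_univ i)
        rw [h, this, mul_zero]
      · rw [div_mul_cancel₀ _ h]
    set N : Matrix (Fin n') (Fin n) ℝ := fun i j => M1 i j + u i * d j with hN
    have hNcol : ∀ j, ∑ i, N i j = 1 := by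
      intro j
      have : ∑ i, N i j = ∑ i, M1 i j + (∑ i, u i) * d j := by
        rw [Finset.sum_mul, ← Finset.sum_add_distrib]
      rw [this, husum, hd]; dsimp only; ring
    have hNnn : ∀ i j, 0 ≤ N i j := fun i j =>
      add_nonneg (hM1nn i j) (mul_nonneg (hu0 i) (hd0 j))
    have expand : ∀ (v : Fin n → ℝ) (i),
        N.mulVec v i = M1.mulVec v i + u i * ∑ j, d j * v j := by
      intro v i
      rw [mulVec_apply, mulVec_apply, Finset.mul_sum, ← Finset.sum_add_distrib]
      exact Finset.sum_congr rfl fun j _ => by rw [hN]; ring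
    have hNq : ∀ i, N.mulVec q i = q' i := by
      intro i
      rw [expand, ← hRq, hur, hr]
      dsimp only; ring
    set P : ℝ := ∑ j, d j * p j with hP
    have hNp : ∀ i, N.mulVec p i = lam * p' i + u i * P := by
      intro i
      rw [expand, hM1p, hP]
    have hPval : P = 1 - lam := by
      have h1 : ∑ i, N.mulVec p i = 1 := by
        rw [sumswap]
        calc ∑ j, (∑ i, N i j) * p j = ∑ j, p j :=
              Finset.sum_congr rfl fun j _ => by rw [hNcol j, one_mul]
          _ = 1 := hpn
      have h2 : ∑ i, N.mulVec p i = lam + P := by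
        calc ∑ i, N.mulVec p i = ∑ i, (lam * p' i + u i * P) :=
              Finset.sum_congr rfl fun i _ => hNp i
          _ = lam * ∑ i, p' i + (∑ i, u i) * P := by
              rw [Finset.mul_sum, Finset.sum_mul, Finset.sum_add_distrib]
          _ = lam + P := by rw [hpn', husum]; ring
      linarith
    refine ⟨u, hu0, husum, N, ⟨hNnn, hNcol⟩, ?_, funext hNq⟩
    funext i
    show N.mulVec p i = lam * p' i + (1 - lam) * u i
    rw [hNp i, hPval]
    ring
end

section
/- Let R = (p,q) be a normalized pair in ℝⁿ₊ (|p| = |q| = 1) and let 1 denote the trivial resource ((1),(1)) in ℝ¹. Then: (a) for every λ ∈ [0,1], z*_λ(R→1) = β_λ(p,q); (b) for every z ∈ (0,1], λ*_z(R→1) = α_z(p,q) = 1 − ε*_z(R→1); (c) if in addition p is strictly positive entrywise, then for every z ∈ (0,1], η̂*_z(R→1) = 1 − z. -/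
open scoped BigOperators

section Aux

variable {n : ℕ}

lemma dot_nonneg' {t p : Fin n → ℝ} (ht : IsTest t) (hp : ∀ i, 0 ≤ p i) : 0 ≤ dot t p :=
  Finset.sum_nonneg fun i _ => mul_nonneg (ht i).1 (hp i)

lemma dot_le_sum' {t p : Fin n → ℝ} (ht : IsTest t) (hp : ∀ i, 0 ≤ p i) :
    dot t p ≤ ∑ i, p i :=
  Finset.sum_le_sum fun i _ => mul_le_of_le_one_left (hp i) (ht i).2

lemma isTest_ones : IsTest (fun _ : Fin n => (1 : ℝ)) := fun _ => ⟨zero_le_one, le_rfl⟩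

lemma isTest_zero : IsTest (fun _ : Fin n => (0 : ℝ)) := fun _ => ⟨le_rfl, zero_le_one⟩

lemma subMaj_one_iff (p q : Fin n → ℝ) (c d : ℝ) :
    SubMaj p q (fun _ : Fin 1 => c) (fun _ : Fin 1 => d) ↔
      ∃ t : Fin n → ℝ, IsTest t ∧ c ≤ dot t p ∧ dot t q ≤ d := by
  constructor
  · rintro ⟨M, ⟨hM0, hM1⟩, hp', hq'⟩
    refine ⟨fun j => M 0 j, fun j => ⟨hM0 0 j, ?_⟩, ?_, ?_⟩
    · simpa using hM1 j
    · simpa [Matrix.mulVec, dotProduct, dot] using hp' 0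
    · simpa [Matrix.mulVec, dotProduct, dot] using hq' 0
  · rintro ⟨t, ht, hcp, hqd⟩
    refine ⟨Matrix.of (fun _ j => t j),
      ⟨fun i j => (ht j).1, fun j => by simpa using (ht j).2⟩, ?_, ?_⟩
    · intro i
      simpa [Matrix.mulVec, dotProduct, dot] using hcp
    · intro i
      simpa [Matrix.mulVec, dotProduct, dot] using hqd

lemma approx_one_iff (p q : Fin n → ℝ) (ε η c d : ℝ) (hε : 0 ≤ ε) (hη : 0 ≤ η) :
    ApproxSubMaj ε η p q (fun _ : Fin 1 => c) (fun _ : Fin 1 => d) ↔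
      ∃ t : Fin n → ℝ, IsTest t ∧ c - ε ≤ dot t p ∧ dot t q ≤ d + η := by
  constructor
  · rintro ⟨M, a, b, ⟨hM0, hM1⟩, ha, hb, hsa, hsb, hp', hq'⟩
    have hsa' : a 0 ≤ ε := by simpa using hsa
    have hsb' : b 0 ≤ η := by simpa using hsb
    refine ⟨fun j => M 0 j, fun j => ⟨hM0 0 j, ?_⟩, ?_, ?_⟩
    · simpa using hM1 j
    · have := hp' 0
      simp [Matrix.mulVec, dotProduct, dot] at this ⊢
      linarith
    · have := hq' 0
      simp [Matrix.mulVec, dotProduct, dot] at this ⊢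
      linarith
  · rintro ⟨t, ht, hcp, hqd⟩
    refine ⟨Matrix.of (fun _ j => t j), fun _ => ε, fun _ => η,
      ⟨fun i j => (ht j).1, fun j => by simpa using (ht j).2⟩,
      fun _ => hε, fun _ => hη, by simp, by simp, ?_, ?_⟩
    · intro i
      simpa [Matrix.mulVec, dotProduct, dot] using hcp
    · intro i
      simpa [Matrix.mulVec, dotProduct, dot] using hqd

end Aux

/-- Work value of a resource `R = (p,q)`: transformations `R → 1` to the trivial resource. -/
theorem stmt_14 {n : ℕ} (p q : Fin n → ℝ)
    (hp : ∀ i, 0 ≤ p i) (hq : ∀ i, 0 ≤ q i)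
    (hpn : ∑ i, p i = 1) (hqn : ∑ i, q i = 1) :
    (∀ lam : ℝ, 0 ≤ lam → lam ≤ 1 →
        ((zStar lam p q (fun _ : Fin 1 => (1 : ℝ)) (fun _ : Fin 1 => (1 : ℝ)) : ℝ) : EReal)
          = beta lam p q) ∧
    (∀ z : ℝ, 0 < z → z ≤ 1 →
        lambdaStar z p q (fun _ : Fin 1 => (1 : ℝ)) (fun _ : Fin 1 => (1 : ℝ))
            = alpha z p q ∧
        alpha z p q
            = 1 - epsStar z p q (fun _ : Fin 1 => (1 : ℝ)) (fun _ : Fin 1 => (1 : ℝ))) ∧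
    ((∀ i, 0 < p i) → ∀ z : ℝ, 0 < z → z ≤ 1 →
        etaStar z p q (fun _ : Fin 1 => (1 : ℝ)) (fun _ : Fin 1 => (1 : ℝ)) = 1 - z) := by
  have hdot1p : dot (fun _ : Fin n => (1:ℝ)) p = 1 := by simp [dot, hpn]
  have hdot1q : dot (fun _ : Fin n => (1:ℝ)) q = 1 := by simp [dot, hqn]
  have hdot0 : ∀ v : Fin n → ℝ, dot (fun _ => (0:ℝ)) v = 0 := by
    intro v; simp [dot]
  have hdotp_le : ∀ {t : Fin n → ℝ}, IsTest t → dot t p ≤ 1 := by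
    intro t ht; simpa [hpn] using dot_le_sum' ht hp
  have hdotq_le : ∀ {t : Fin n → ℝ}, IsTest t → dot t q ≤ 1 := by
    intro t ht; simpa [hqn] using dot_le_sum' ht hq
  refine ⟨?_, ?_, ?_⟩
  · -- part (a)
    intro lam hlam0 hlam1
    set S : Set ℝ := {y | ∃ t : Fin n → ℝ, IsTest t ∧ lam ≤ dot t p ∧ y = dot t q} with hSdef
    have hSne : S.Nonempty := ⟨1, fun _ => 1, isTest_ones, by rw [hdot1p]; exact hlam1, hdot1q.symm⟩
    have hSbd : BddBelow S := ⟨0, by rintro y ⟨t, ht, -, rfl⟩; exact dot_nonneg' ht hq⟩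
    have hz : zStar lam p q (fun _ : Fin 1 => (1:ℝ)) (fun _ : Fin 1 => (1:ℝ)) = sInf S := by
      unfold zStar
      apply le_antisymm
      · refine csInf_le_csInf ⟨0, fun z hz => hz.1⟩ hSne ?_
        rintro y ⟨t, ht, htp, rfl⟩
        exact ⟨dot_nonneg' ht hq,
          (subMaj_one_iff p q (lam * 1) (dot t q * 1)).2
            ⟨t, ht, by simpa using htp, by simp⟩⟩
      · refine le_csInf ⟨1, zero_le_one,
          (subMaj_one_iff p q (lam * 1) (1 * 1)).2
            ⟨fun _ => 1, isTest_ones, by simpa [hdot1p], by simp [hdot1q]⟩⟩ ?_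
        rintro z ⟨hz0, hsub⟩
        obtain ⟨t, ht, htp, htq⟩ := (subMaj_one_iff p q (lam * 1) (z * 1)).1 hsub
        exact (csInf_le hSbd ⟨t, ht, by simpa using htp, rfl⟩).trans (by simpa using htq)
    have hB : {y : EReal | ∃ t : Fin n → ℝ, IsTest t ∧ lam ≤ dot t p ∧
        y = ((dot t q : ℝ) : EReal)} = (fun x : ℝ => (x : EReal)) '' S := by
      ext y
      constructor
      · rintro ⟨t, h1, h2, h3⟩
        exact ⟨dot t q, ⟨t, h1, h2, rfl⟩, h3.symm⟩
      · rintro ⟨x, ⟨t, h1, h2, h3⟩, h4⟩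
        exact ⟨t, h1, h2, by rw [← h4, h3]⟩
    rw [hz]
    unfold beta
    rw [hB]
    apply le_antisymm
    · refine le_sInf ?_
      rintro y ⟨x, hx, rfl⟩
      exact EReal.coe_le_coe_iff.2 (csInf_le hSbd hx)
    · rw [sInf_le_iff]
      intro b hb
      induction b using EReal.rec with
      | bot => exact bot_le
      | coe r =>
        have hr : r ≤ sInf S := by
          refine le_csInf hSne fun x hx => ?_
          exact EReal.coe_le_coe_iff.1 (hb ⟨x, hx, rfl⟩)
        exact_mod_cast hr
      | top =>
        obtain ⟨x, hx⟩ := hSne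
        have := hb ⟨x, hx, rfl⟩
        simp at this
  · -- part (b)
    intro z hz0 hz1
    set A : Set ℝ := {x | ∃ t : Fin n → ℝ, IsTest t ∧ dot t q ≤ z ∧ x = dot t p} with hAdef
    have hAne : A.Nonempty :=
      ⟨0, fun _ => 0, isTest_zero, by rw [hdot0]; exact hz0.le, (hdot0 p).symm⟩
    have hAbd : BddAbove A := ⟨1, by rintro x ⟨t, ht, -, rfl⟩; exact hdotp_le ht⟩
    have halpha : alpha z p q = sSup A := rfl
    constructor
    · -- lambdaStar = alpha
      unfold lambdaStar
      rw [halpha]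
      apply le_antisymm
      · refine csSup_le ⟨0, le_rfl, zero_le_one,
          (subMaj_one_iff p q (0 * 1) (z * 1)).2
            ⟨fun _ => 0, isTest_zero, by simp [hdot0], by rw [hdot0]; nlinarith⟩⟩ ?_
        rintro lam ⟨h0, h1, hsub⟩
        obtain ⟨t, ht, htp, htq⟩ := (subMaj_one_iff p q (lam * 1) (z * 1)).1 hsub
        refine le_trans (by simpa using htp) (le_csSup hAbd ⟨t, ht, by simpa using htq, rfl⟩)
      · refine csSup_le_csSup ⟨1, fun lam hlam => hlam.2.1⟩ hAne ?_
        rintro x ⟨t, ht, htq, rfl⟩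
        exact ⟨dot_nonneg' ht hp, hdotp_le ht,
          (subMaj_one_iff p q (dot t p * 1) (z * 1)).2
            ⟨t, ht, by simp, by simpa using htq⟩⟩
    · -- alpha = 1 - epsStar
      unfold epsStar
      rw [halpha]
      have hEbd : BddBelow {ε : ℝ | 0 ≤ ε ∧ ApproxSubMaj ε 0 p q (fun _ : Fin 1 => (1:ℝ))
          (fun i => z * 1)} := ⟨0, fun ε hε => hε.1⟩
      have hEne : (1:ℝ) ∈ {ε : ℝ | 0 ≤ ε ∧ ApproxSubMaj ε 0 p q (fun _ : Fin 1 => (1:ℝ))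
          (fun i => z * 1)} := by
        refine ⟨zero_le_one, (approx_one_iff p q 1 0 1 (z * 1) zero_le_one le_rfl).2
          ⟨fun _ => 0, isTest_zero, by rw [hdot0]; norm_num, by rw [hdot0]; nlinarith⟩⟩
      have key : sInf {ε : ℝ | 0 ≤ ε ∧ ApproxSubMaj ε 0 p q (fun _ : Fin 1 => (1:ℝ))
          (fun i => z * 1)} = 1 - sSup A := by
        apply le_antisymm
        · have h1 : sSup A ≤ 1 - sInf {ε : ℝ | 0 ≤ ε ∧ ApproxSubMaj ε 0 p q
              (fun _ : Fin 1 => (1:ℝ)) (fun i => z * 1)} := by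
            refine csSup_le hAne ?_
            rintro x ⟨t, ht, htq, rfl⟩
            have hmem : (1 - dot t p) ∈ {ε : ℝ | 0 ≤ ε ∧ ApproxSubMaj ε 0 p q
                (fun _ : Fin 1 => (1:ℝ)) (fun i => z * 1)} := by
              refine ⟨by linarith [hdotp_le ht],
                (approx_one_iff p q (1 - dot t p) 0 1 (z * 1)
                  (by linarith [hdotp_le ht]) le_rfl).2 ⟨t, ht, by linarith, by linarith⟩⟩
            linarith [csInf_le hEbd hmem]
          linarith
        · refine le_csInf ⟨1, hEne⟩ ?_
          rintro ε ⟨hε0, happ⟩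
          obtain ⟨t, ht, htp, htq⟩ := (approx_one_iff p q ε 0 1 (z * 1) hε0 le_rfl).1 happ
          have : dot t p ≤ sSup A := le_csSup hAbd ⟨t, ht, by linarith, rfl⟩
          linarith
      rw [key]; ring
  · -- part (c)
    intro hpp z hz0 hz1
    unfold etaStar
    have hset : {η : ℝ | 0 ≤ η ∧ ApproxSubMaj 0 η p q (fun _ : Fin 1 => (1:ℝ))
        (fun i => z * 1)} = Set.Ici (1 - z) := by
      ext η
      simp only [Set.mem_setOf_eq, Set.mem_Ici]
      constructor
      · rintro ⟨hη0, happ⟩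
        obtain ⟨t, ht, htp, htq⟩ := (approx_one_iff p q 0 η 1 (z * 1) le_rfl hη0).1 happ
        have hsum0 : ∑ i, (1 - t i) * p i = 0 := by
          have hle : ∑ i, (1 - t i) * p i ≤ 0 := by
            have : ∑ i, (1 - t i) * p i = 1 - dot t p := by
              simp [sub_mul, Finset.sum_sub_distrib, hpn, dot]
            rw [this]; linarith
          exact le_antisymm hle (Finset.sum_nonneg fun i _ =>
            mul_nonneg (by linarith [(ht i).2]) (hp i))
        have ht1 : ∀ i, t i = 1 := by
          intro i
          have := (Finset.sum_eq_zero_iff_of_nonneg (fun i _ =>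
            mul_nonneg (by linarith [(ht i).2] : (0:ℝ) ≤ 1 - t i) (hp i))).1 hsum0
              i (Finset.mem_univ i)
          have hpi := hpp i
          rcases mul_eq_zero.1 this with h | h
          · linarith
          · linarith
        have hqt : dot t q = 1 := by
          have : dot t q = ∑ i, q i :=
            Finset.sum_congr rfl fun i _ => by rw [ht1 i, one_mul]
          rw [this, hqn]
        rw [hqt] at htq
        linarith
      · intro hη
        have hη0 : 0 ≤ η := by linarith
        exact ⟨hη0, (approx_one_iff p q 0 η 1 (z * 1) le_rfl hη0).2
          ⟨fun _ => 1, isTest_ones, by rw [hdot1p]; norm_num, by rw [hdot1q]; linarith⟩⟩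
    rw [hset, csInf_Ici]
end

section
/- Let R = (p,q) be a normalized pair in ℝⁿ₊ (|p| = |q| = 1) with q strictly positive entrywise, and let 1 denote the trivial resource ((1),(1)) in ℝ¹. Then: (a) for every λ ∈ [0,1], z*_λ(1→R) = λ · max_{1≤k≤n} p_k/q_k; (b) for every z ≥ 1, ε*_z(1→R) = Σ_{k=1}^n (p_k − z q_k)₊ = η̂*_z(1→R), where (t)₊ := max(t,0). -/
open scoped BigOperators

/-!
A substochastic map out of the one-point space is a single column `m ≥ 0` with `|m| ≤ 1`,
so `1 ≻ (p', q')` amounts to `p' ≤ m ≤ q'` for such an `m`; when `p' ≥ 0` and `|p'| ≤ 1`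
one can take `m = p'`, and the condition becomes `p' ≤ q'` entrywise. For `p' = λp`,
`q' = zq` this reads `z ≥ λ max_k p_k/q_k`. For the approximate transformations, any errors
satisfy `p' - a ≤ m ≤ q' + b`, hence `(p' - q')₊ ≤ a + b`; the bound `Σ (p' - q')₊` is
attained by `m = min p' q'` with `a = (p' - q')₊` (first kind), or by `m = p'` with
`b = (p' - q')₊` (second kind).
-/

open Finset

theorem mulVec_of_const_fin_one {ι : Type*} (m : ι → ℝ) :
    (Matrix.of fun i (_ : Fin 1) => m i).mulVec (fun _ => 1) = m := by
  ext i
  simp [Matrix.mulVec, dotProduct]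

section TrivialSource

variable {ι κ : Type*} [Fintype ι] [Fintype κ]

theorem le_of_subMaj_self {r : κ → ℝ} {p' q' : ι → ℝ} (h : SubMaj r r p' q') (i : ι) :
    p' i ≤ q' i := by
  obtain ⟨M, -, hp, hq⟩ := h
  exact (hp i).trans (hq i)

theorem sum_posPart_sub_le_of_approxSubMaj_self {ε η : ℝ} {r : κ → ℝ} {p' q' : ι → ℝ}
    (h : ApproxSubMaj ε η r r p' q') : ∑ i, max (p' i - q' i) 0 ≤ ε + η := by
  obtain ⟨M, a, b, -, ha, hb, hεa, hηb, hpa, hqb⟩ := h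
  calc ∑ i, max (p' i - q' i) 0 ≤ ∑ i, (a i + b i) :=
        sum_le_sum fun i _ =>
          max_le (by linarith [hpa i, hqb i]) (add_nonneg (ha i) (hb i))
    _ = ∑ i, a i + ∑ i, b i := sum_add_distrib
    _ ≤ ε + η := add_le_add hεa hηb

variable {p' q' : ι → ℝ}

theorem subMaj_one_of_le (hp' : ∀ i, 0 ≤ p' i) (hp'1 : ∑ i, p' i ≤ 1)
    (h : ∀ i, p' i ≤ q' i) : SubMaj (fun _ : Fin 1 => (1 : ℝ)) (fun _ => 1) p' q' :=
  ⟨Matrix.of fun i _ => p' i, ⟨fun i _ => hp' i, fun _ => hp'1⟩,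
    fun i => (congrFun (mulVec_of_const_fin_one p') i).ge,
    fun i => (congrFun (mulVec_of_const_fin_one p') i).trans_le (h i)⟩

theorem approxSubMaj_one_sum_posPart_zero (hp' : ∀ i, 0 ≤ p' i) (hp'1 : ∑ i, p' i ≤ 1)
    (hq' : ∀ i, 0 ≤ q' i) :
    ApproxSubMaj (∑ i, max (p' i - q' i) 0) 0
      (fun _ : Fin 1 => (1 : ℝ)) (fun _ => 1) p' q' := by
  refine ⟨Matrix.of fun i _ => min (p' i) (q' i), fun i => max (p' i - q' i) 0, 0,
    ⟨fun i _ => le_min (hp' i) (hq' i),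
      fun _ => (sum_le_sum fun i _ => min_le_left _ _).trans hp'1⟩,
    fun i => le_max_right _ _, fun _ => le_rfl, le_rfl, by simp, fun i => ?_, fun i => ?_⟩
  · rw [mulVec_of_const_fin_one]
    rcases le_total (p' i) (q' i) with h | h <;> simp [h]
  · simp [mulVec_of_const_fin_one]

theorem approxSubMaj_one_zero_sum_posPart (hp' : ∀ i, 0 ≤ p' i) (hp'1 : ∑ i, p' i ≤ 1) :
    ApproxSubMaj 0 (∑ i, max (p' i - q' i) 0)
      (fun _ : Fin 1 => (1 : ℝ)) (fun _ => 1) p' q' := by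
  refine ⟨Matrix.of fun i _ => p' i, 0, fun i => max (p' i - q' i) 0,
    ⟨fun i _ => hp' i, fun _ => hp'1⟩, fun _ => le_rfl, fun i => le_max_right _ _, by simp,
    le_rfl, fun i => ?_, fun i => ?_⟩
  · simp [mulVec_of_const_fin_one]
  · rw [mulVec_of_const_fin_one]
    linarith [le_max_left (p' i - q' i) 0]

theorem forall_le_mul_iff_ciSup_div_le [Nonempty ι] {x q : ι → ℝ} (hq : ∀ i, 0 < q i)
    {z : ℝ} :
    (∀ i, x i ≤ z * q i) ↔ ⨆ i, x i / q i ≤ z := by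
  rw [ciSup_le_iff (Set.finite_range _).bddAbove]
  exact forall_congr' fun i => (div_le_iff₀ (hq i)).symm

theorem zStar_one_eq [Nonempty ι] {lam : ℝ} (hp' : ∀ i, 0 ≤ p' i) (hp'1 : ∑ i, p' i ≤ 1)
    (hq' : ∀ i, 0 < q' i) (hlam0 : 0 ≤ lam) (hlam1 : lam ≤ 1) :
    zStar lam (fun _ : Fin 1 => (1 : ℝ)) (fun _ => 1) p' q' = lam * ⨆ k, p' k / q' k := by
  have hC : lam * ⨆ k, p' k / q' k = ⨆ k, lam * p' k / q' k := by
    simp_rw [Real.mul_iSup_of_nonneg hlam0, mul_div_assoc]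
  have hlamp : ∀ i, 0 ≤ lam * p' i := fun i => mul_nonneg hlam0 (hp' i)
  have hlamp1 : ∑ i, lam * p' i ≤ 1 := by
    rw [← mul_sum]
    exact mul_le_one₀ hlam1 (sum_nonneg fun i _ => hp' i) hp'1
  refine IsLeast.csInf_eq ⟨⟨?_, subMaj_one_of_le hlamp hlamp1 ?_⟩, fun z ⟨_, h⟩ => ?_⟩
  · exact mul_nonneg hlam0 (Real.iSup_nonneg fun k => div_nonneg (hp' k) (hq' k).le)
  · exact (forall_le_mul_iff_ciSup_div_le hq').2 hC.ge
  · exact hC ▸ (forall_le_mul_iff_ciSup_div_le hq').1 (le_of_subMaj_self h)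

theorem epsStar_one_eq {z : ℝ} (hp' : ∀ i, 0 ≤ p' i) (hp'1 : ∑ i, p' i ≤ 1)
    (hzq' : ∀ i, 0 ≤ z * q' i) :
    epsStar z (fun _ : Fin 1 => (1 : ℝ)) (fun _ => 1) p' q' = ∑ i, max (p' i - z * q' i) 0 :=
  IsLeast.csInf_eq
    ⟨⟨sum_nonneg fun _ _ => le_max_right _ _,
        approxSubMaj_one_sum_posPart_zero hp' hp'1 hzq'⟩,
      fun _ ⟨_, h⟩ => by simpa using sum_posPart_sub_le_of_approxSubMaj_self h⟩

theorem etaStar_one_eq {z : ℝ} (hp' : ∀ i, 0 ≤ p' i) (hp'1 : ∑ i, p' i ≤ 1) :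
    etaStar z (fun _ : Fin 1 => (1 : ℝ)) (fun _ => 1) p' q' = ∑ i, max (p' i - z * q' i) 0 :=
  IsLeast.csInf_eq
    ⟨⟨sum_nonneg fun _ _ => le_max_right _ _, approxSubMaj_one_zero_sum_posPart hp' hp'1⟩,
      fun _ ⟨_, h⟩ => by simpa using sum_posPart_sub_le_of_approxSubMaj_self h⟩

end TrivialSource

theorem stmt_15_general {n : ℕ} (p q : Fin n → ℝ)
    (hp : ∀ i, 0 ≤ p i) (hq : ∀ i, 0 < q i)
    (hpn : ∑ i, p i = 1) :
    (∀ lam : ℝ, 0 ≤ lam → lam ≤ 1 →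
        zStar lam (fun _ : Fin 1 => (1 : ℝ)) (fun _ : Fin 1 => (1 : ℝ)) p q
          = lam * ⨆ k : Fin n, p k / q k) ∧
    (∀ z : ℝ, 1 ≤ z →
        epsStar z (fun _ : Fin 1 => (1 : ℝ)) (fun _ : Fin 1 => (1 : ℝ)) p q
            = ∑ k, max (p k - z * q k) 0 ∧
        etaStar z (fun _ : Fin 1 => (1 : ℝ)) (fun _ : Fin 1 => (1 : ℝ)) p q
            = ∑ k, max (p k - z * q k) 0) := by
  have : Nonempty (Fin n) :=
    univ_nonempty_iff.mp (nonempty_of_sum_ne_zero (hpn ▸ one_ne_zero))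
  refine ⟨fun lam hlam0 hlam1 => zStar_one_eq hp hpn.le hq hlam0 hlam1,
    fun z hz => ⟨?_, ?_⟩⟩
  · exact epsStar_one_eq hp hpn.le fun i => mul_nonneg (by linarith) (hq i).le
  · exact etaStar_one_eq hp hpn.le

/-- Work cost of a resource `R = (p,q)`: transformations `1 → R` from the trivial resource. -/
theorem stmt_15 {n : ℕ} (p q : Fin n → ℝ)
    (hp : ∀ i, 0 ≤ p i) (hq : ∀ i, 0 < q i)
    (hpn : ∑ i, p i = 1) (hqn : ∑ i, q i = 1) :
    (∀ lam : ℝ, 0 ≤ lam → lam ≤ 1 →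
        zStar lam (fun _ : Fin 1 => (1 : ℝ)) (fun _ : Fin 1 => (1 : ℝ)) p q
          = lam * ⨆ k : Fin n, p k / q k) ∧
    (∀ z : ℝ, 1 ≤ z →
        epsStar z (fun _ : Fin 1 => (1 : ℝ)) (fun _ : Fin 1 => (1 : ℝ)) p q
            = ∑ k, max (p k - z * q k) 0 ∧
        etaStar z (fun _ : Fin 1 => (1 : ℝ)) (fun _ : Fin 1 => (1 : ℝ)) p q
            = ∑ k, max (p k - z * q k) 0) :=
  stmt_15_general p q hp hq hpn
end

section
/- Let R = (p,q) be a normalized pair in ℝⁿ₊ (|p| = |q| = 1) with q strictly positive entrywise, let 1 denote the trivial resource ((1),(1)) in ℝ¹, and let z, z' ≥ 0. Then ε*_z(R→1) + ε*_{z'}(1→R) ≥ 1 − z z'. -/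
open scoped BigOperators

private lemma key_16 {n : ℕ} (p q : Fin n → ℝ)
    (hp : ∀ i, 0 ≤ p i) (hq : ∀ i, 0 < q i)
    (z z' : ℝ) (hz : 0 ≤ z) (hz' : 0 ≤ z')
    (ε ε' : ℝ)
    (h1 : ApproxSubMaj ε 0 p q (fun _ : Fin 1 => (1 : ℝ)) (fun i => z * 1))
    (h2 : ApproxSubMaj ε' 0 (fun _ : Fin 1 => (1 : ℝ)) (fun _ : Fin 1 => (1 : ℝ)) p
      (fun i => z' * q i)) :
    1 - z * z' ≤ ε + ε' := by
  obtain ⟨M, a, b, ⟨hMnn, hMcol⟩, ha, hb, hasum, hbsum, hMp, hMq⟩ := h1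
  obtain ⟨N, c, d, ⟨hNnn, hNcol⟩, hc, hd, hcsum, hdsum, hNp, hNq⟩ := h2
  -- b = 0 and d = 0
  have hb0 : ∀ i, b i = 0 := by
    intro i
    have h1 : b i ≤ ∑ j, b j := Finset.single_le_sum (fun j _ => hb j) (Finset.mem_univ i)
    linarith [hb i, hbsum]
  have hd0 : ∀ i, d i = 0 := by
    intro i
    have h1 : d i ≤ ∑ j, d j := Finset.single_le_sum (fun j _ => hd j) (Finset.mem_univ i)
    linarith [hd i, hdsum]
  set t : Fin n → ℝ := fun j => M 0 j with ht
  set s : Fin n → ℝ := fun i => N i 0 with hs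
  have htest : ∀ j, 0 ≤ t j ∧ t j ≤ 1 := by
    intro j
    refine ⟨hMnn 0 j, ?_⟩
    have := hMcol j
    simpa [Fin.sum_univ_one] using this
  -- from h1: 1 - ε ≤ dot t p and dot t q ≤ z
  have htp : 1 - ε ≤ ∑ j, t j * p j := by
    have h1 := hMp 0
    have h2 : a 0 ≤ ε := by
      have := Finset.single_le_sum (fun j _ => ha j) (Finset.mem_univ (0 : Fin 1))
      linarith [hasum]
    have h3 : (1 : ℝ) - a 0 ≤ ∑ j, M 0 j * p j := by
      simpa [Matrix.mulVec, dotProduct] using h1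
    calc 1 - ε ≤ 1 - a 0 := by linarith
    _ ≤ ∑ j, M 0 j * p j := h3
    _ = ∑ j, t j * p j := rfl
  have htq : ∑ j, t j * q j ≤ z := by
    have h1 := hMq 0
    have h3 : ∑ j, M 0 j * q j ≤ z * 1 + b 0 := by
      simpa [Matrix.mulVec, dotProduct] using h1
    rw [hb0 0] at h3
    linarith
  -- from h2: p i ≤ s i + c i and s i ≤ z' * q i, s i ≥ 0
  have hsle : ∀ i, s i ≤ z' * q i := by
    intro i
    have h1 := hNq i
    have h3 : N i 0 ≤ z' * q i + d i := by
      simpa [Matrix.mulVec, dotProduct, Fin.sum_univ_one] using h1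
    rw [hd0 i] at h3
    linarith
  have hple : ∀ i, p i ≤ s i + c i := by
    intro i
    have h1 := hNp i
    have h3 : p i ≤ N i 0 + c i := by
      have := h1; simp [Matrix.mulVec, dotProduct, Fin.sum_univ_one] at this
      linarith
    linarith
  -- chain
  have step1 : ∑ j, t j * p j ≤ ∑ j, t j * s j + ∑ j, t j * c j := by
    rw [← Finset.sum_add_distrib]
    apply Finset.sum_le_sum
    intro j _
    have := hple j
    nlinarith [(htest j).1]
  have step2 : ∑ j, t j * s j ≤ ∑ j, t j * (z' * q j) := by
    apply Finset.sum_le_sum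
    intro j _
    exact mul_le_mul_of_nonneg_left (hsle j) (htest j).1
  have step3 : ∑ j, t j * c j ≤ ∑ j, c j := by
    apply Finset.sum_le_sum
    intro j _
    nlinarith [(htest j).1, (htest j).2, hc j]
  have step4 : ∑ j, t j * (z' * q j) = z' * ∑ j, t j * q j := by
    rw [Finset.mul_sum]; apply Finset.sum_congr rfl; intro j _; ring
  have step5 : z' * ∑ j, t j * q j ≤ z' * z :=
    mul_le_mul_of_nonneg_left htq hz'
  nlinarith [hcsum]

/-- Fenchel inequality for work value and work cost:
`ε*_z(R→1) + ε*_{z'}(1→R) ≥ 1 − z z'`. -/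
theorem stmt_16 {n : ℕ} (p q : Fin n → ℝ)
    (hp : ∀ i, 0 ≤ p i) (hq : ∀ i, 0 < q i)
    (hpn : ∑ i, p i = 1) (hqn : ∑ i, q i = 1)
    (z z' : ℝ) (hz : 0 ≤ z) (hz' : 0 ≤ z') :
    1 - z * z' ≤ epsStar z p q (fun _ : Fin 1 => (1 : ℝ)) (fun _ : Fin 1 => (1 : ℝ))
      + epsStar z' (fun _ : Fin 1 => (1 : ℝ)) (fun _ : Fin 1 => (1 : ℝ)) p q := by
  unfold epsStar
  set S1 := {ε : ℝ | 0 ≤ ε ∧ ApproxSubMaj ε 0 p q (fun _ : Fin 1 => (1 : ℝ))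
    (fun i => z * (fun _ : Fin 1 => (1 : ℝ)) i)} with hS1
  set S2 := {ε : ℝ | 0 ≤ ε ∧ ApproxSubMaj ε 0 (fun _ : Fin 1 => (1 : ℝ))
    (fun _ : Fin 1 => (1 : ℝ)) p (fun i => z' * q i)} with hS2
  have hS1ne : S1.Nonempty := by
    refine ⟨1, by norm_num, 0, (fun _ => 1), 0, ⟨⟨fun i j => le_refl 0, fun j => by
      simp [Fin.sum_univ_one]⟩, fun i => by norm_num, fun i => le_refl 0,
      by simp [Fin.sum_univ_one], by simp, fun i => by
        simp [Matrix.mulVec, dotProduct], fun i => by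
        simp [Matrix.mulVec, dotProduct]; positivity⟩⟩
  have hS2ne : S2.Nonempty := by
    refine ⟨1, by norm_num, 0, p, 0, ⟨⟨fun i j => le_refl 0, fun j => by
      simp [hp]⟩, hp, fun i => le_refl 0, le_of_eq hpn, by simp, fun i => by
        simp [Matrix.mulVec, dotProduct], fun i => by
        simp [Matrix.mulVec, dotProduct]
        nlinarith [(hq i).le, hz']⟩⟩
  have key : ∀ ε ∈ S1, ∀ ε' ∈ S2, 1 - z * z' ≤ ε + ε' := by
    intro ε hε ε' hε'
    exact key_16 p q hp hq z z' hz hz' ε ε' hε.2 hε'.2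
  have h2 : (1 - z * z') - sInf S2 ≤ sInf S1 := by
    apply le_csInf hS1ne
    intro ε hε
    have : (1 - z * z') - ε ≤ sInf S2 := by
      apply le_csInf hS2ne
      intro ε' hε'
      linarith [key ε hε ε' hε']
    linarith
  linarith
end
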